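/- arXiv:2008.07428 — 3 statements merged into one kernel-verified Lean document; each statement's English description precedes it below -/
import Mathlib

section
/- Let W ∈ ℝ^{n×n} be a nonnegative, primitive, doubly stochastic matrix with positive diagonal entries, and let J := (1/n)𝟙_n𝟙_nᵀ. Then λ := ‖W − J‖ (spectral norm) satisfies λ ∈ [0,1), and for every x ∈ ℝ^n one has ‖Wx − Jx‖ ≤ λ‖x − Jx‖. -/
/-! Let `J` be the averaging matrix, the orthogonal projection onto constant vectors. Since
`W J = J`, we have `(W - J) x = W (x - J x)` with `‖x - J x‖ ≤ ‖x‖`, so it suffices that `‖W y‖ < ‖y‖` for every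
non-constant `y`. For doubly stochastic `W` one has
`2 (‖y‖² - ‖W y‖²) = ∑ⱼₗ (WᵀW)ⱼₗ (yⱼ - yₗ)²`, and the positive diagonal gives `(WᵀW)ⱼₗ > 0`
whenever `Wⱼₗ > 0`; equality would therefore make `y` constant along the edges of the graph of
`W`, which is strongly connected because `W` is primitive. Compactness of the unit sphere turns
this pointwise strict inequality into `‖W - J‖ < 1`, and the last inequality holds because
`(W - J) J = 0`. -/

open Finset Matrix

theorem ContinuousLinearMap.opNorm_lt_one_of_norm_apply_lt {E F : Type*}
    [NormedAddCommGroup E] [NormedSpace ℝ E] [FiniteDimensional ℝ E]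
    [SeminormedAddCommGroup F] [NormedSpace ℝ F] (T : E →L[ℝ] F)
    (h : ∀ x ≠ 0, ‖T x‖ < ‖x‖) : ‖T‖ < 1 := by
  rcases subsingleton_or_nontrivial E with hE | hE
  · simp [Subsingleton.elim T 0]
  obtain ⟨z, hz, hTz⟩ : ‖T‖ ∈ (fun x => ‖T x‖) '' Metric.sphere 0 1 := by
    rw [← T.sSup_sphere_eq_norm]
    exact ((isCompact_sphere 0 1).image (by fun_prop)).sSup_mem
      ((NormedSpace.sphere_nonempty.2 zero_le_one).image _)
  rw [mem_sphere_zero_iff_norm] at hz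
  rw [← hTz, ← hz]
  exact h z (ne_zero_of_norm_ne_zero (by rw [hz]; exact one_ne_zero))

theorem Matrix.two_mul_dotProduct_sub_dotProduct_mulVec {ι R : Type*} [Fintype ι] [CommRing R]
    {M : Matrix ι ι R} (hrow : M *ᵥ 1 = 1) (hcol : 1 ᵥ* M = 1) (y : ι → R) :
    2 * (y ⬝ᵥ y - y ⬝ᵥ (M *ᵥ y)) = ∑ j, ∑ l, M j l * (y j - y l) ^ 2 := by
  have hr : ∀ j, ∑ l, M j l = 1 := fun j => by
    simpa [mulVec, dotProduct] using congrFun hrow j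
  have hc : ∀ l, ∑ j, M j l = 1 := fun l => by
    simpa [vecMul, dotProduct] using congrFun hcol l
  have expand : ∀ j l, M j l * (y j - y l) ^ 2
      = M j l * y j ^ 2 + M j l * y l ^ 2 - 2 * (y j * (M j l * y l)) := fun j l => by ring
  simp only [expand, sum_add_distrib, sum_sub_distrib, ← mul_sum, ← sum_mul]
  rw [sum_comm (f := fun j l => M j l * y l ^ 2)]
  simp only [← sum_mul, hr, hc, one_mul, dotProduct, mulVec, sq]
  ring

theorem Matrix.IsIrreducible.apply_eq_of_forall_pos {ι R α : Type*} [Ring R] [LinearOrder R]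
    {A : Matrix ι ι R} (hA : A.IsIrreducible) {y : ι → α}
    (hy : ∀ i j, 0 < A i j → y i = y j) (i j : ι) : y i = y j := by
  let := toQuiver A
  obtain ⟨p, -⟩ := hA.connected i j
  induction p with
  | nil => rfl
  | cons _ e ih => exact ih.trans (hy _ _ e.down)

theorem Matrix.dotProduct_mulVec_self_lt {ι : Type*} [Fintype ι] [DecidableEq ι] {W : Matrix ι ι ℝ} (hW : W ∈ doublyStochastic ℝ ι)
    (hirr : W.IsIrreducible) (hdiag : ∀ i, 0 < W i i) {y : ι → ℝ} (hy : ∃ i j, y i ≠ y j) :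
    (W *ᵥ y) ⬝ᵥ (W *ᵥ y) < y ⬝ᵥ y := by
  obtain ⟨i, j, hij⟩ := hy
  by_contra! hle
  have hM : Wᵀ * W ∈ doublyStochastic ℝ ι :=
    mul_mem (transpose_mem_doublyStochastic_iff.2 hW) hW
  have hquad : (W *ᵥ y) ⬝ᵥ (W *ᵥ y) = y ⬝ᵥ ((Wᵀ * W) *ᵥ y) := by
    rw [← mulVec_mulVec, dotProduct_mulVec y, vecMul_transpose]
  have hterm_nonneg : ∀ j l, 0 ≤ (Wᵀ * W) j l * (y j - y l) ^ 2 := fun j l =>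
    mul_nonneg (nonneg_of_mem_doublyStochastic hM) (sq_nonneg _)
  have hsum : ∑ j, ∑ l, (Wᵀ * W) j l * (y j - y l) ^ 2 = 0 := by
    refine le_antisymm ?_ (sum_nonneg fun j _ => sum_nonneg fun l _ => hterm_nonneg j l)
    rw [← two_mul_dotProduct_sub_dotProduct_mulVec (mulVec_one_of_mem_doublyStochastic hM)
      (one_vecMul_of_mem_doublyStochastic hM), ← hquad]
    linarith
  have hedge : ∀ j l, 0 < W j l → y j = y l := by
    intro j l hjl
    -- `(WᵀW) j l ≥ W j j * W j l`: this is where the positive diagonal enters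
    have hMpos : 0 < (Wᵀ * W) j l := by
      refine (mul_pos (hdiag j) hjl).trans_le ?_
      rw [mul_apply]
      exact single_le_sum (f := fun k => Wᵀ j k * W k l)
        (fun k _ => mul_nonneg (nonneg_of_mem_doublyStochastic hW)
          (nonneg_of_mem_doublyStochastic hW)) (mem_univ j)
    have hrow := (sum_eq_zero_iff_of_nonneg fun j _ => sum_nonneg fun l _ =>
      hterm_nonneg j l).1 hsum j (mem_univ j)
    have hterm := (sum_eq_zero_iff_of_nonneg fun l _ => hterm_nonneg j l).1 hrow l (mem_univ l)
    simpa [hMpos.ne', sub_eq_zero] using hterm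
  exact hij (hirr.apply_eq_of_forall_pos hedge i j)

noncomputable def averagingMatrix (ι : Type*) [Fintype ι] : Matrix ι ι ℝ :=
  of fun _ _ => (Fintype.card ι : ℝ)⁻¹

section Averaging

variable {ι : Type*} [Fintype ι]

theorem averagingMatrix_mulVec_const (c : ℝ) :
    averagingMatrix ι *ᵥ (fun _ => c) = fun _ => c := by
  ext i
  have : Nonempty ι := ⟨i⟩
  simp [averagingMatrix, mulVec, dotProduct]

theorem mul_averagingMatrix {W : Matrix ι ι ℝ} (hW : W *ᵥ 1 = 1) :
    W * averagingMatrix ι = averagingMatrix ι := by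
  ext i j
  simpa [averagingMatrix, mul_apply, ← sum_mul, mulVec, dotProduct] using
    congrArg (· * (Fintype.card ι : ℝ)⁻¹) (congrFun hW i)

theorem isStarProjection_averagingMatrix :
    IsStarProjection (averagingMatrix ι) where
  isIdempotentElem := mul_averagingMatrix (averagingMatrix_mulVec_const 1)
  isSelfAdjoint := by ext; simp [averagingMatrix, star_apply]

variable [DecidableEq ι] {W : Matrix ι ι ℝ}

theorem norm_toEuclideanCLM_apply_lt (hW : W ∈ doublyStochastic ℝ ι) (hirr : W.IsIrreducible)
    (hdiag : ∀ i, 0 < W i i) {v : EuclideanSpace ℝ ι} (hv : ∃ i j, v i ≠ v j) :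
    ‖toEuclideanCLM (𝕜 := ℝ) W v‖ < ‖v‖ := by
  rw [← sq_lt_sq₀ (norm_nonneg _) (norm_nonneg _), EuclideanSpace.real_norm_sq_eq,
    EuclideanSpace.real_norm_sq_eq]
  simpa [dotProduct, sq] using dotProduct_mulVec_self_lt hW hirr hdiag hv

theorem toEuclideanCLM_sub_averagingMatrix_eq (hW : W *ᵥ 1 = 1) :
    toEuclideanCLM (𝕜 := ℝ) (W - averagingMatrix ι) =
      toEuclideanCLM (𝕜 := ℝ) W * (1 - toEuclideanCLM (𝕜 := ℝ) (averagingMatrix ι)) := by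
  rw [mul_sub, mul_one, ← map_mul, mul_averagingMatrix hW, map_sub]

theorem norm_toEuclideanCLM_sub_averagingMatrix_apply_lt (hW : W ∈ doublyStochastic ℝ ι)
    (hirr : W.IsIrreducible) (hdiag : ∀ i, 0 < W i i) {x : EuclideanSpace ℝ ι} (hx : x ≠ 0) :
    ‖toEuclideanCLM (𝕜 := ℝ) (W - averagingMatrix ι) x‖ < ‖x‖ := by
  rw [toEuclideanCLM_sub_averagingMatrix_eq (mulVec_one_of_mem_doublyStochastic hW),
    mul_apply_eq_comp]
  set P := toEuclideanCLM (𝕜 := ℝ) (averagingMatrix ι)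
  have hP : IsStarProjection P := isStarProjection_averagingMatrix.map toEuclideanCLM
  set y := (1 - P) x
  by_cases hy : ∃ i j, y i ≠ y j
  · refine (norm_toEuclideanCLM_apply_lt hW hirr hdiag hy).trans_le ?_
    calc ‖y‖ ≤ ‖1 - P‖ * ‖x‖ := (1 - P).le_opNorm x
      _ ≤ ‖x‖ := mul_le_of_le_one_left (norm_nonneg x) hP.one_sub.norm_le
  -- a constant vector is fixed by `P`, while `P y = 0`
  have hy0 : y = 0 := by
    push Not at hy
    ext i
    have hPy : P y = 0 := by
      rw [← mul_apply_eq_comp, hP.mul_one_sub_self]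
      rfl
    have hPy_eq : P y i = y i := by
      change (averagingMatrix ι *ᵥ WithLp.ofLp y) i = y i
      rw [show WithLp.ofLp y = fun _ => y i from funext fun j => hy j i,
        averagingMatrix_mulVec_const]
    rw [← hPy_eq, hPy]
  rw [hy0, map_zero, norm_zero]
  exact norm_pos_iff.2 hx

theorem norm_toEuclideanCLM_sub_averagingMatrix_lt_one (hW : W ∈ doublyStochastic ℝ ι)
    (hirr : W.IsIrreducible) (hdiag : ∀ i, 0 < W i i) :
    ‖toEuclideanCLM (𝕜 := ℝ) (W - averagingMatrix ι)‖ < 1 :=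
  ContinuousLinearMap.opNorm_lt_one_of_norm_apply_lt _ fun _ hx =>
    norm_toEuclideanCLM_sub_averagingMatrix_apply_lt hW hirr hdiag hx

theorem norm_toEuclideanCLM_sub_averagingMatrix_apply_le (hW : W *ᵥ 1 = 1)
    (x : EuclideanSpace ℝ ι) :
    ‖toEuclideanCLM (𝕜 := ℝ) W x - toEuclideanCLM (𝕜 := ℝ) (averagingMatrix ι) x‖ ≤
      ‖toEuclideanCLM (𝕜 := ℝ) (W - averagingMatrix ι)‖ *
        ‖x - toEuclideanCLM (𝕜 := ℝ) (averagingMatrix ι) x‖ := by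
  have hTP : toEuclideanCLM (𝕜 := ℝ) (W - averagingMatrix ι) *
      toEuclideanCLM (𝕜 := ℝ) (averagingMatrix ι) = 0 := by
    rw [toEuclideanCLM_sub_averagingMatrix_eq hW, mul_assoc,
      (isStarProjection_averagingMatrix.map toEuclideanCLM).one_sub_mul_self, mul_zero]
  have hT := map_sub (toEuclideanCLM (𝕜 := ℝ) (n := ι)) W (averagingMatrix ι)
  set A := toEuclideanCLM (𝕜 := ℝ) W
  set P := toEuclideanCLM (𝕜 := ℝ) (averagingMatrix ι)
  set T := toEuclideanCLM (𝕜 := ℝ) (W - averagingMatrix ι)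
  calc ‖A x - P x‖ = ‖T (x - P x)‖ := by
        rw [map_sub T, ← mul_apply_eq_comp T P, hTP, _root_.zero_apply, sub_zero, hT]
        rfl
    _ ≤ ‖T‖ * ‖x - P x‖ := T.le_opNorm _

end Averaging

theorem weight_matrix_contraction_general (n : ℕ) (W : Matrix (Fin n) (Fin n) ℝ)
    (hWnonneg : ∀ i j, 0 ≤ W i j) (hWdiag : ∀ i, 0 < W i i)
    (hWprim : ∃ k : ℕ, 0 < k ∧ ∀ i j, 0 < (W ^ k) i j)
    (hWrow : ∀ i, ∑ j, W i j = 1) (hWcol : ∀ j, ∑ i, W i j = 1) :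
    (0 : ℝ) ≤ ‖(Matrix.toEuclideanCLM (𝕜 := ℝ) (W - Matrix.of fun _ _ => (n : ℝ)⁻¹) :
        EuclideanSpace ℝ (Fin n) →L[ℝ] EuclideanSpace ℝ (Fin n))‖ ∧
    ‖(Matrix.toEuclideanCLM (𝕜 := ℝ) (W - Matrix.of fun _ _ => (n : ℝ)⁻¹) :
        EuclideanSpace ℝ (Fin n) →L[ℝ] EuclideanSpace ℝ (Fin n))‖ < 1 ∧
    ∀ x : EuclideanSpace ℝ (Fin n),
      ‖Matrix.toEuclideanCLM (𝕜 := ℝ) W x -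
          Matrix.toEuclideanCLM (𝕜 := ℝ) (Matrix.of fun _ _ => (n : ℝ)⁻¹) x‖
        ≤ ‖(Matrix.toEuclideanCLM (𝕜 := ℝ) (W - Matrix.of fun _ _ => (n : ℝ)⁻¹) :
            EuclideanSpace ℝ (Fin n) →L[ℝ] EuclideanSpace ℝ (Fin n))‖ *
          ‖x - Matrix.toEuclideanCLM (𝕜 := ℝ) (Matrix.of fun _ _ => (n : ℝ)⁻¹) x‖ := by
  have hJ : (of fun _ _ => (n : ℝ)⁻¹ : Matrix (Fin n) (Fin n) ℝ) = averagingMatrix (Fin n) := by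
    simp [averagingMatrix]
  have hW : W ∈ doublyStochastic ℝ (Fin n) :=
    mem_doublyStochastic_iff_sum.2 ⟨hWnonneg, hWrow, hWcol⟩
  have hirr : W.IsIrreducible := IsPrimitive.isIrreducible ⟨hWnonneg, hWprim⟩
  rw [hJ]
  exact ⟨norm_nonneg _, norm_toEuclideanCLM_sub_averagingMatrix_lt_one hW hirr hWdiag,
    norm_toEuclideanCLM_sub_averagingMatrix_apply_le (mulVec_one_of_mem_doublyStochastic hW)⟩

/-- The weight matrix is a contraction with factor `λ = ‖W - J‖ < 1`. -/
theorem weight_matrix_contraction (n : ℕ) (hn : 0 < n) (W : Matrix (Fin n) (Fin n) ℝ)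
    (hWnonneg : ∀ i j, 0 ≤ W i j) (hWdiag : ∀ i, 0 < W i i)
    (hWprim : ∃ k : ℕ, 0 < k ∧ ∀ i j, 0 < (W ^ k) i j)
    (hWrow : ∀ i, ∑ j, W i j = 1) (hWcol : ∀ j, ∑ i, W i j = 1) :
    (0 : ℝ) ≤ ‖(Matrix.toEuclideanCLM (𝕜 := ℝ) (W - Matrix.of fun _ _ => (n : ℝ)⁻¹) :
        EuclideanSpace ℝ (Fin n) →L[ℝ] EuclideanSpace ℝ (Fin n))‖ ∧
    ‖(Matrix.toEuclideanCLM (𝕜 := ℝ) (W - Matrix.of fun _ _ => (n : ℝ)⁻¹) :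
        EuclideanSpace ℝ (Fin n) →L[ℝ] EuclideanSpace ℝ (Fin n))‖ < 1 ∧
    ∀ x : EuclideanSpace ℝ (Fin n),
      ‖Matrix.toEuclideanCLM (𝕜 := ℝ) W x -
          Matrix.toEuclideanCLM (𝕜 := ℝ) (Matrix.of fun _ _ => (n : ℝ)⁻¹) x‖
        ≤ ‖(Matrix.toEuclideanCLM (𝕜 := ℝ) (W - Matrix.of fun _ _ => (n : ℝ)⁻¹) :
            EuclideanSpace ℝ (Fin n) →L[ℝ] EuclideanSpace ℝ (Fin n))‖ *
          ‖x - Matrix.toEuclideanCLM (𝕜 := ℝ) (Matrix.of fun _ _ => (n : ℝ)⁻¹) x‖ :=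
  weight_matrix_contraction_general n W hWnonneg hWdiag hWprim hWrow hWcol
end

section
/- Under the GT-SARAH setup, if 0 < α ≤ 1/(2L), then for every integer S ≥ 1: E[F(x̄^{q+1,S})] ≤ F(x̄^{0,1}) − (α/2) Σ_{s=1}^S Σ_{t=0}^q E[‖∇F(x̄^{t,s})‖²] − (α/4) Σ_{s=1}^S Σ_{t=0}^q E[‖v̄^{t,s}‖²] + α Σ_{s=1}^S Σ_{t=0}^q E[‖v̄^{t,s} − ∇f̄(x^{t,s})‖²] + αL² Σ_{s=1}^S Σ_{t=0}^q E[‖x^{t,s} − J x^{t,s}‖²/n]. -/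
/-!
Averaging the recursion over the nodes with the column-stochastic `W` shows that `ȳ` tracks `v̄`
(`ȳ^{t+1,s} = v̄^{t,s}`), so the mean iterate takes the inexact gradient step
`x̄^{t+1,s} = x̄^{t,s} - α v̄^{t,s}`. For the `L`-smooth `F` and `αL ≤ 1/2`, the descent lemma
bounds the change of `F` in one step by
`-(α/2)‖∇F(x̄)‖² - (α/4)‖v̄‖² + α‖v̄ - ∇f̄(x)‖² + α‖∇F(x̄) - ∇f̄(x)‖²`, and mean-squared smoothness
bounds the last term by `αL²‖x - Jx‖²/n`. Telescoping over all inner and outer iterations gives the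
inequality along every sample path. Each iterate depends on `ω` only through finitely many sample
indices, so it is measurable with finite range, and the pathwise inequality can be integrated.
-/

open MeasureTheory Finset

section Averages

variable {ι F : Type*} [Fintype ι] [SeminormedAddCommGroup F] [NormedSpace ℝ F]

theorem norm_avg_sq_le (a : ι → F) :
    ‖(Fintype.card ι : ℝ)⁻¹ • ∑ i, a i‖ ^ 2 ≤ (Fintype.card ι : ℝ)⁻¹ * ∑ i, ‖a i‖ ^ 2 := by
  calc ‖(Fintype.card ι : ℝ)⁻¹ • ∑ i, a i‖ ^ 2
      ≤ ((∑ i, ‖a i‖) / #(univ : Finset ι)) ^ 2 := by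
        rw [norm_smul, norm_inv, Real.norm_natCast, card_univ, inv_mul_eq_div]
        gcongr
        exact norm_sum_le _ _
    _ ≤ (∑ i, ‖a i‖ ^ 2) / #(univ : Finset ι) := sum_div_card_sq_le_sum_sq_div_card
    _ = _ := by rw [card_univ, inv_mul_eq_div]

theorem norm_avg_sub_avg_sq_le (a b : ι → F) :
    ‖(Fintype.card ι : ℝ)⁻¹ • ∑ i, a i - (Fintype.card ι : ℝ)⁻¹ • ∑ i, b i‖ ^ 2
      ≤ (Fintype.card ι : ℝ)⁻¹ * ∑ i, ‖a i - b i‖ ^ 2 := by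
  rw [← smul_sub, ← sum_sub_distrib]
  exact norm_avg_sq_le _

theorem norm_avg_apply_sub_avg_apply_sq_le {E : Type*} [SeminormedAddCommGroup E]
    {g : ι → E → F} {L : ℝ} (hg : ∀ i u w, ‖g i u - g i w‖ ≤ L * ‖u - w‖) (b : E) (a : ι → E) :
    ‖(Fintype.card ι : ℝ)⁻¹ • ∑ i, g i b - (Fintype.card ι : ℝ)⁻¹ • ∑ i, g i (a i)‖ ^ 2
      ≤ L ^ 2 * ((Fintype.card ι : ℝ)⁻¹ * ∑ i, ‖b - a i‖ ^ 2) := by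
  calc _ ≤ (Fintype.card ι : ℝ)⁻¹ * ∑ i, ‖g i b - g i (a i)‖ ^ 2 := norm_avg_sub_avg_sq_le _ _
    _ ≤ (Fintype.card ι : ℝ)⁻¹ * ∑ i, L ^ 2 * ‖b - a i‖ ^ 2 := by
      gcongr with i
      rw [← mul_pow]
      exact pow_le_pow_left₀ (norm_nonneg _) (hg i b (a i)) 2
    _ = _ := by rw [← mul_sum]; ring

end Averages

section Gradient

variable {E : Type*} [NormedAddCommGroup E] [InnerProductSpace ℝ E] [CompleteSpace E]

theorem gradient_const_mul_sum {ι : Type*} (s : Finset ι) {f : ι → E → ℝ} (c : ℝ) {x : E}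
    (hf : ∀ j ∈ s, DifferentiableAt ℝ (f j) x) :
    gradient (fun z => c * ∑ j ∈ s, f j z) x = c • ∑ j ∈ s, gradient (f j) x := by
  refine HasGradientAt.gradient (hasGradientAt_iff_hasFDerivAt.2 ?_)
  rw [map_smul, map_sum]
  exact (HasFDerivAt.fun_sum fun j hj => (hf j hj).hasGradientAt.hasFDerivAt).const_mul c

theorem apply_le_add_inner_add_sq_of_lipschitz_gradient {f : E → ℝ} (hf : Differentiable ℝ f)
    {L : ℝ} (hlip : ∀ u w, ‖gradient f u - gradient f w‖ ≤ L * ‖u - w‖) (a b : E) :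
    f b ≤ f a + inner ℝ (gradient f a) (b - a) + L / 2 * ‖b - a‖ ^ 2 := by
  set d := b - a
  set g : ℝ → ℝ := fun t => f (a + t • d) - t * inner ℝ (gradient f a) d - L / 2 * ‖d‖ ^ 2 * t ^ 2
  have hg : ∀ t, HasDerivAt g
      (inner ℝ (gradient f (a + t • d) - gradient f a) d - L * ‖d‖ ^ 2 * t) t := by
    intro t
    have hline : HasDerivAt (fun t : ℝ => a + t • d) d t := by
      simpa using ((hasDerivAt_id t).smul_const d).const_add a
    have hf' := (hf (a + t • d)).hasGradientAt.hasFDerivAt.comp_hasDerivAt t hline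
    rw [InnerProductSpace.toDual_apply_apply] at hf'
    refine ((hf'.sub (hasDerivAt_mul_const _)).sub
      ((hasDerivAt_pow 2 t).const_mul _)).congr_deriv ?_
    rw [inner_sub_left]
    ring
  have hanti : AntitoneOn g (Set.Icc 0 1) := by
    refine antitoneOn_of_deriv_nonpos (convex_Icc 0 1)
      (fun t _ => (hg t).continuousAt.continuousWithinAt)
      (fun t _ => (hg t).differentiableAt.differentiableWithinAt) fun t ht => ?_
    rw [interior_Icc] at ht
    rw [(hg t).deriv, sub_nonpos]
    calc inner ℝ (gradient f (a + t • d) - gradient f a) d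
        ≤ ‖gradient f (a + t • d) - gradient f a‖ * ‖d‖ := real_inner_le_norm _ _
      _ ≤ L * ‖t • d‖ * ‖d‖ := by
        gcongr
        simpa using hlip (a + t • d) a
      _ = L * ‖d‖ ^ 2 * t := by
        rw [norm_smul, Real.norm_of_nonneg ht.1.le]
        ring
  have h01 := hanti (by simp) (by simp) zero_le_one
  simp only [g, d, zero_smul, add_zero, one_smul, add_sub_cancel] at h01
  linarith

theorem apply_sub_smul_le_of_lipschitz_gradient {f : E → ℝ} (hf : Differentiable ℝ f) {L α : ℝ}
    (hlip : ∀ u w, ‖gradient f u - gradient f w‖ ≤ L * ‖u - w‖) (hα : 0 ≤ α)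
    (hαL : α * L ≤ 1 / 2) (a v h : E) :
    f (a - α • v) ≤ f a - α / 2 * ‖gradient f a‖ ^ 2 - α / 4 * ‖v‖ ^ 2
      + α * ‖v - h‖ ^ 2 + α * ‖gradient f a - h‖ ^ 2 := by
  set g := gradient f a
  have hdescent := apply_le_add_inner_add_sq_of_lipschitz_gradient hf hlip a (a - α • v)
  rw [sub_sub_cancel_left, inner_neg_right, real_inner_smul_right, norm_neg, norm_smul,
    Real.norm_of_nonneg hα] at hdescent
  have hpolar := norm_sub_sq_real g v
  have hpar := parallelogram_law_with_norm ℝ (g - h) (v - h)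
  rw [sub_sub_sub_cancel_right] at hpar
  have hstep : L / 2 * (α * ‖v‖) ^ 2 ≤ α / 4 * ‖v‖ ^ 2 := by
    nlinarith [mul_le_mul_of_nonneg_right hαL (mul_nonneg hα (sq_nonneg ‖v‖))]
  nlinarith [sq_nonneg ‖g - h + (v - h)‖]

end Gradient

theorem sum_sum_smul_eq_sum_of_sum_col_eq_one {ι R M : Type*} [Fintype ι] [Semiring R]
    [AddCommMonoid M] [Module R M] {W : Matrix ι ι R} (hW : ∀ r, ∑ i, W i r = 1) (z : ι → M) :
    ∑ i, ∑ r, W i r • z r = ∑ r, z r := by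
  rw [sum_comm]
  simp only [← sum_smul, hW, one_smul]

theorem eq_lag_of_increments {E : Type*} [AddCommGroup E] (q : ℕ) {Y : ℕ → ℕ → E}
    {V : ℤ → ℕ → E}
    (hinit : Y 0 1 = V (-1) 1)
    (hstep : ∀ s, 1 ≤ s → ∀ t : ℕ, t ≤ q → Y (t + 1) s = Y t s + V t s - V (t - 1) s)
    (hY : ∀ s, 1 ≤ s → Y 0 (s + 1) = Y (q + 1) s)
    (hV : ∀ s, 1 ≤ s → V (-1) (s + 1) = V q s) :
    ∀ s, 1 ≤ s → ∀ t : ℕ, t ≤ q + 1 → Y t s = V (t - 1) s := by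
  have hepoch : ∀ s, 1 ≤ s → Y 0 s = V (-1) s → ∀ t : ℕ, t ≤ q + 1 → Y t s = V (t - 1) s := by
    intro s hs h0 t
    induction t with
    | zero => simpa using h0
    | succ t ih =>
      intro ht
      rw [hstep s hs t (by omega), ih (by omega), add_sub_cancel_left]
      congr 1
      omega
  intro s hs
  induction s, hs using Nat.le_induction with
  | base => exact hepoch 1 le_rfl hinit
  | succ s hs ih =>
    refine hepoch (s + 1) (by omega) ?_
    rw [hY s hs, hV s hs, ih (q + 1) le_rfl]
    push_cast
    simp

theorem le_add_sum_sum_of_le_add (q : ℕ) {a : ℕ → ℕ → ℝ} {d : ℕ → ℕ → ℝ}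
    (hstep : ∀ s, 1 ≤ s → ∀ t, t ≤ q → a (t + 1) s ≤ a t s + d s t)
    (hcarry : ∀ s, 1 ≤ s → a 0 (s + 1) = a (q + 1) s) :
    ∀ S, 1 ≤ S → a (q + 1) S ≤ a 0 1 + ∑ s ∈ Icc 1 S, ∑ t ∈ range (q + 1), d s t := by
  have hepoch : ∀ s, 1 ≤ s → ∀ T, T ≤ q + 1 → a T s ≤ a 0 s + ∑ t ∈ range T, d s t := by
    intro s hs T
    induction T with
    | zero => simp
    | succ T ih =>
      intro hT
      rw [sum_range_succ]
      linarith [ih (by omega), hstep s hs T (by omega)]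
  intro S hS
  induction S, hS using Nat.le_induction with
  | base => simpa using hepoch 1 le_rfl (q + 1) le_rfl
  | succ S hS ih =>
    rw [sum_Icc_succ_top (by omega)]
    linarith [hepoch (S + 1) (by omega) (q + 1) le_rfl, hcarry S hS]

section FiniteRange

variable {Ω γ δ : Type*} [MeasurableSpace Ω] [MeasurableSpace γ] [MeasurableSpace δ]

def MeasurableFiniteRange (g : Ω → γ) : Prop :=
  Measurable g ∧ (Set.range g).Finite

theorem Measurable.measurableFiniteRange [Finite γ] {g : Ω → γ} (hg : Measurable g) :
    MeasurableFiniteRange g :=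
  ⟨hg, Set.toFinite _⟩

theorem measurableFiniteRange_const (c : γ) : MeasurableFiniteRange fun _ : Ω => c :=
  ⟨measurable_const, (Set.finite_singleton c).subset Set.range_const_subset⟩

namespace MeasurableFiniteRange

theorem comp [MeasurableSingletonClass γ] {g : Ω → γ} (hg : MeasurableFiniteRange g)
    (h : γ → δ) : MeasurableFiniteRange fun ω => h (g ω) := by
  have : Finite (Set.range g) := hg.2
  refine ⟨(measurable_of_finite fun c : Set.range g => h c).comp hg.1.rangeFactorization, ?_⟩
  rw [Set.range_comp' h g]
  exact hg.2.image h

theorem pair {g : Ω → γ} {g' : Ω → δ} (hg : MeasurableFiniteRange g)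
    (hg' : MeasurableFiniteRange g') : MeasurableFiniteRange fun ω => (g ω, g' ω) :=
  ⟨hg.1.prodMk hg'.1, (hg.2.prod hg'.2).subset (Set.range_pair_subset _ _)⟩

theorem pi {ι : Type*} [Finite ι] {κ : ι → Type*} [∀ i, MeasurableSpace (κ i)]
    {g : ∀ i, Ω → κ i} (hg : ∀ i, MeasurableFiniteRange (g i)) :
    MeasurableFiniteRange fun ω i => g i ω :=
  ⟨measurable_pi_lambda _ fun i => (hg i).1,
    (Set.Finite.pi fun i => (hg i).2).subset (Set.range_subset_iff.2 fun ω _ _ => ⟨ω, rfl⟩)⟩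

theorem integrable (μ : Measure Ω) [IsFiniteMeasure μ] {g : Ω → ℝ}
    (hg : MeasurableFiniteRange g) : Integrable g μ := by
  obtain ⟨C, hC⟩ := (hg.2.image norm).bddAbove
  exact .of_bound hg.1.aestronglyMeasurable C
    (ae_of_all _ fun ω => hC ⟨g ω, ⟨ω, rfl⟩, rfl⟩)

end MeasurableFiniteRange

end FiniteRange

theorem integral_le_add_sum_sum_integral {Ω ι κ : Type*} [MeasurableSpace Ω] {μ : Measure Ω}
    [IsProbabilityMeasure μ] {g : Ω → ℝ} {d : ι → κ → Ω → ℝ} {c : ℝ} {s : Finset ι}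
    {T : Finset κ} (hg : Integrable g μ) (hd : ∀ i ∈ s, ∀ k ∈ T, Integrable (d i k) μ)
    (h : ∀ ω, g ω ≤ c + ∑ i ∈ s, ∑ k ∈ T, d i k ω) :
    ∫ ω, g ω ∂μ ≤ c + ∑ i ∈ s, ∑ k ∈ T, ∫ ω, d i k ω ∂μ := by
  have hsum : Integrable (fun ω => ∑ i ∈ s, ∑ k ∈ T, d i k ω) μ :=
    integrable_finsetSum _ fun i hi => integrable_finsetSum _ (hd i hi)
  calc ∫ ω, g ω ∂μ ≤ ∫ ω, (c + ∑ i ∈ s, ∑ k ∈ T, d i k ω) ∂μ :=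
        integral_mono hg ((integrable_const c).add hsum) h
    _ = _ := by
      rw [integral_add (integrable_const c) hsum, integral_const, probReal_univ, one_smul,
        integral_finsetSum _ fun i hi => integrable_finsetSum _ (hd i hi)]
      exact congrArg _ (sum_congr rfl fun i hi => integral_finsetSum _ (hd i hi))

namespace GTSarah

structure IsRun {Ω E : Type*} [NormedAddCommGroup E] [InnerProductSpace ℝ E] [CompleteSpace E]
    {n m B : ℕ} (q : ℕ) (f : Fin n → Fin m → E → ℝ) (fI : Fin n → E → ℝ)
    (W : Matrix (Fin n) (Fin n) ℝ) (α : ℝ) (τ : ℕ → ℕ → Fin n → Fin B → Ω → Fin m)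
    (x y : ℕ → ℕ → Fin n → Ω → E) (v : ℤ → ℕ → Fin n → Ω → E) (x0 : E) : Prop where
  x_init : ∀ i ω, x 0 1 i ω = x0
  y_init : ∀ i ω, y 0 1 i ω = 0
  v_init : ∀ i ω, v (-1) 1 i ω = 0
  v_zero : ∀ s, 1 ≤ s → ∀ i ω, v 0 s i ω = gradient (fI i) (x 0 s i ω)
  v_succ : ∀ s, 1 ≤ s → ∀ t : ℕ, 1 ≤ t → t ≤ q → ∀ i ω,
    v t s i ω = (B : ℝ)⁻¹ • (∑ l, (gradient (f i (τ t s i l ω)) (x t s i ω)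
      - gradient (f i (τ t s i l ω)) (x (t - 1) s i ω))) + v (t - 1) s i ω
  y_succ : ∀ s, 1 ≤ s → ∀ t : ℕ, t ≤ q → ∀ i ω,
    y (t + 1) s i ω = (∑ r, W i r • y t s r ω) + v t s i ω - v (t - 1) s i ω
  x_succ : ∀ s, 1 ≤ s → ∀ t : ℕ, t ≤ q → ∀ i ω,
    x (t + 1) s i ω = (∑ r, W i r • x t s r ω) - α • y (t + 1) s i ω
  x_carry : ∀ s, 1 ≤ s → ∀ i ω, x 0 (s + 1) i ω = x (q + 1) s i ω
  y_carry : ∀ s, 1 ≤ s → ∀ i ω, y 0 (s + 1) i ω = y (q + 1) s i ω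
  v_carry : ∀ s, 1 ≤ s → ∀ i ω, v (-1) (s + 1) i ω = v q s i ω

variable {Ω E : Type*} [NormedAddCommGroup E] [InnerProductSpace ℝ E] [CompleteSpace E]
  {n m B q : ℕ} {f : Fin n → Fin m → E → ℝ} {fI : Fin n → E → ℝ} {W : Matrix (Fin n) (Fin n) ℝ}
  {α : ℝ} {τ : ℕ → ℕ → Fin n → Fin B → Ω → Fin m} {x y : ℕ → ℕ → Fin n → Ω → E}
  {v : ℤ → ℕ → Fin n → Ω → E} {x0 : E}

namespace IsRun

theorem avg_y_succ (run : IsRun q f fI W α τ x y v x0) (hW : ∀ r, ∑ i, W i r = 1) (ω : Ω)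
    (s : ℕ) (hs : 1 ≤ s) (t : ℕ) (ht : t ≤ q) :
    (n : ℝ)⁻¹ • ∑ i, y (t + 1) s i ω = (n : ℝ)⁻¹ • ∑ i, v t s i ω := by
  have hlag := eq_lag_of_increments q (Y := fun t s => (n : ℝ)⁻¹ • ∑ i, y t s i ω)
    (V := fun t s => (n : ℝ)⁻¹ • ∑ i, v t s i ω)
    (by simp [run.y_init, run.v_init])
    (fun s hs t ht => by
      simp only [run.y_succ s hs t ht, sum_add_distrib, sum_sub_distrib,
        sum_sum_smul_eq_sum_of_sum_col_eq_one hW, smul_add, smul_sub])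
    (fun s hs => by simp only [run.y_carry s hs])
    (fun s hs => by simp only [run.v_carry s hs])
  simpa using hlag s hs (t + 1) (by omega)

theorem avg_x_succ (run : IsRun q f fI W α τ x y v x0) (hW : ∀ r, ∑ i, W i r = 1) (ω : Ω)
    (s : ℕ) (hs : 1 ≤ s) (t : ℕ) (ht : t ≤ q) :
    (n : ℝ)⁻¹ • ∑ i, x (t + 1) s i ω
      = (n : ℝ)⁻¹ • ∑ i, x t s i ω - α • (n : ℝ)⁻¹ • ∑ i, v t s i ω := by
  rw [← run.avg_y_succ hW ω s hs t ht]
  simp only [run.x_succ s hs t ht, sum_sub_distrib, sum_sum_smul_eq_sum_of_sum_col_eq_one hW,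
    smul_sub, ← smul_sum, smul_comm α]

theorem apply_avg_x_le (run : IsRun q f fI W α τ x y v x0) (hn : 1 ≤ n)
    (hW : ∀ r, ∑ i, W i r = 1) {F : E → ℝ} {L : ℝ} (hF : Differentiable ℝ F)
    (hgradF : ∀ z, gradient F z = (n : ℝ)⁻¹ • ∑ i, gradient (fI i) z)
    (hlip : ∀ i u w, ‖gradient (fI i) u - gradient (fI i) w‖ ≤ L * ‖u - w‖)
    (hL : 0 ≤ L) (hα : 0 ≤ α) (hαL : α * L ≤ 1 / 2) (ω : Ω) (S : ℕ) (hS : 1 ≤ S) :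
    F ((n : ℝ)⁻¹ • ∑ i, x (q + 1) S i ω) ≤ F x0 + ∑ s ∈ Icc 1 S, ∑ t ∈ range (q + 1),
      (-(α / 2) * ‖gradient F ((n : ℝ)⁻¹ • ∑ i, x t s i ω)‖ ^ 2
        + (-(α / 4) * ‖(n : ℝ)⁻¹ • ∑ i, v t s i ω‖ ^ 2
        + (α * ‖(n : ℝ)⁻¹ • ∑ i, v t s i ω - (n : ℝ)⁻¹ • ∑ i, gradient (fI i) (x t s i ω)‖ ^ 2
        + α * L ^ 2 * ((∑ i, ‖x t s i ω - (n : ℝ)⁻¹ • ∑ i', x t s i' ω‖ ^ 2) / n)))) := by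
  have hn0 : (n : ℝ) ≠ 0 := by positivity
  have hcons : ∀ b (a : Fin n → E), ‖gradient F b - (n : ℝ)⁻¹ • ∑ i, gradient (fI i) (a i)‖ ^ 2
      ≤ L ^ 2 * ((∑ i, ‖a i - b‖ ^ 2) / n) := fun b a => by
    simpa [hgradF, norm_sub_rev b, inv_mul_eq_div] using
      norm_avg_apply_sub_avg_apply_sq_le hlip b a
  have hlipF : ∀ u w, ‖gradient F u - gradient F w‖ ≤ L * ‖u - w‖ := fun u w => by
    refine (pow_le_pow_iff_left₀ (norm_nonneg _) (by positivity) two_ne_zero).1 ?_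
    simpa [hgradF, sum_const, norm_sub_rev w, hn0, mul_pow] using hcons u fun _ => w
  have hx0 : (n : ℝ)⁻¹ • ∑ i, x 0 1 i ω = x0 := by
    simp [run.x_init, ← Nat.cast_smul_eq_nsmul ℝ, smul_smul, hn0]
  rw [← hx0]
  refine le_add_sum_sum_of_le_add q (a := fun t s => F ((n : ℝ)⁻¹ • ∑ i, x t s i ω))
    (fun s hs t ht => ?_) (fun s hs => by simp only [run.x_carry s hs]) S hS
  rw [run.avg_x_succ hW ω s hs t ht]
  have hstep := apply_sub_smul_le_of_lipschitz_gradient hF hlipF hα hαL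
    ((n : ℝ)⁻¹ • ∑ i, x t s i ω) ((n : ℝ)⁻¹ • ∑ i, v t s i ω)
    ((n : ℝ)⁻¹ • ∑ i, gradient (fI i) (x t s i ω))
  have hgap := mul_le_mul_of_nonneg_left (hcons ((n : ℝ)⁻¹ • ∑ i, x t s i ω) (x t s · ω)) hα
  linarith

section Measurability

variable [MeasurableSpace Ω] [MeasurableSpace E] [MeasurableSingletonClass E]

theorem measurableFiniteRange_xy_succ (run : IsRun q f fI W α τ x y v x0) {s : ℕ} (hs : 1 ≤ s)
    {t : ℕ} (ht : t ≤ q) (hx : MeasurableFiniteRange fun ω i => x t s i ω)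
    (hy : MeasurableFiniteRange fun ω i => y t s i ω)
    (hv : MeasurableFiniteRange fun ω i => v t s i ω)
    (hv' : MeasurableFiniteRange fun ω i => v (t - 1) s i ω) :
    (MeasurableFiniteRange fun ω i => x (t + 1) s i ω) ∧
      MeasurableFiniteRange fun ω i => y (t + 1) s i ω := by
  have hy₁ : MeasurableFiniteRange fun ω i => y (t + 1) s i ω := by
    simp only [run.y_succ s hs t ht]
    exact (hy.pair (hv.pair hv')).comp fun z i => (∑ r, W i r • z.1 r) + z.2.1 i - z.2.2 i
  refine ⟨?_, hy₁⟩
  simp only [run.x_succ s hs t ht]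
  exact (hx.pair hy₁).comp fun z i => (∑ r, W i r • z.1 r) - α • z.2 i

theorem measurableFiniteRange_v_succ (run : IsRun q f fI W α τ x y v x0)
    (hτ : ∀ t s i l, Measurable (τ t s i l)) {s : ℕ} (hs : 1 ≤ s) {t : ℕ} (ht : t + 1 ≤ q)
    (hx₁ : MeasurableFiniteRange fun ω i => x (t + 1) s i ω)
    (hx : MeasurableFiniteRange fun ω i => x t s i ω)
    (hv : MeasurableFiniteRange fun ω i => v t s i ω) :
    MeasurableFiniteRange fun ω i => v (t + 1 : ℕ) s i ω := by
  have hsample : MeasurableFiniteRange fun ω i l => τ (t + 1) s i l ω :=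
    .pi fun i => .pi fun l => (hτ _ _ i l).measurableFiniteRange
  simp only [run.v_succ s hs (t + 1) (by omega) ht]
  simp only [Nat.add_sub_cancel, Nat.cast_add, Nat.cast_one, add_sub_cancel_right]
  exact (hsample.pair (hx₁.pair (hx.pair hv))).comp fun z i =>
    (B : ℝ)⁻¹ • (∑ l, (gradient (f i (z.1 i l)) (z.2.1 i) - gradient (f i (z.1 i l)) (z.2.2.1 i)))
      + z.2.2.2 i

theorem measurableFiniteRange_epoch (run : IsRun q f fI W α τ x y v x0)
    (hτ : ∀ t s i l, Measurable (τ t s i l)) {s : ℕ} (hs : 1 ≤ s)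
    (hx : MeasurableFiniteRange fun ω i => x 0 s i ω)
    (hy : MeasurableFiniteRange fun ω i => y 0 s i ω)
    (hv : MeasurableFiniteRange fun ω i => v (-1) s i ω) :
    (∀ t, t ≤ q + 1 → (MeasurableFiniteRange fun ω i => x t s i ω) ∧
      MeasurableFiniteRange fun ω i => y t s i ω) ∧
    ∀ t : ℕ, t ≤ q → MeasurableFiniteRange fun ω i => v t s i ω := by
  have hinner : ∀ t : ℕ, t ≤ q → (MeasurableFiniteRange fun ω i => x t s i ω) ∧
      (MeasurableFiniteRange fun ω i => y t s i ω) ∧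
      (MeasurableFiniteRange fun ω i => v ((t : ℤ) - 1) s i ω) ∧
      MeasurableFiniteRange fun ω i => v t s i ω := by
    intro t
    induction t with
    | zero =>
      intro _
      refine ⟨hx, hy, by simpa using hv, ?_⟩
      simp only [Nat.cast_zero, run.v_zero s hs]
      exact hx.comp fun z i => gradient (fI i) (z i)
    | succ t ih =>
      intro ht
      obtain ⟨hxt, hyt, hvt', hvt⟩ := ih (by omega)
      obtain ⟨hx₁, hy₁⟩ := measurableFiniteRange_xy_succ run hs (by omega) hxt hyt hvt hvt'
      exact ⟨hx₁, hy₁, by simpa using hvt, measurableFiniteRange_v_succ run hτ hs ht hx₁ hxt hvt⟩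
  refine ⟨fun t ht => ?_, fun t ht => (hinner t ht).2.2.2⟩
  obtain ht | rfl := ht.lt_or_eq
  · exact ⟨(hinner t (by omega)).1, (hinner t (by omega)).2.1⟩
  · obtain ⟨hxq, hyq, hvq', hvq⟩ := hinner q le_rfl
    exact measurableFiniteRange_xy_succ run hs le_rfl hxq hyq hvq hvq'

theorem measurableFiniteRange_iterates (run : IsRun q f fI W α τ x y v x0)
    (hτ : ∀ t s i l, Measurable (τ t s i l)) {s : ℕ} (hs : 1 ≤ s) :
    (∀ t, t ≤ q + 1 → MeasurableFiniteRange fun ω i => x t s i ω) ∧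
      ∀ t : ℕ, t ≤ q → MeasurableFiniteRange fun ω i => v t s i ω := by
  have hstart : ∀ s, 1 ≤ s → (MeasurableFiniteRange fun ω i => x 0 s i ω) ∧
      (MeasurableFiniteRange fun ω i => y 0 s i ω) ∧
      MeasurableFiniteRange fun ω i => v (-1) s i ω := by
    intro s hs
    induction s, hs using Nat.le_induction with
    | base =>
      simp only [run.x_init, run.y_init, run.v_init]
      exact ⟨measurableFiniteRange_const _, measurableFiniteRange_const _,
        measurableFiniteRange_const _⟩
    | succ s hs ih =>
      obtain ⟨hxy, hv⟩ := measurableFiniteRange_epoch run hτ hs ih.1 ih.2.1 ih.2.2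
      simp only [run.x_carry s hs, run.y_carry s hs, run.v_carry s hs]
      exact ⟨(hxy _ le_rfl).1, (hxy _ le_rfl).2, hv q le_rfl⟩
  obtain ⟨hxy, hv⟩ := measurableFiniteRange_epoch run hτ hs (hstart s hs).1 (hstart s hs).2.1
    (hstart s hs).2.2
  exact ⟨fun t ht => (hxy t ht).1, hv⟩

theorem integrable_comp_iterates (μ : Measure Ω) [IsFiniteMeasure μ]
    (run : IsRun q f fI W α τ x y v x0) (hτ : ∀ t s i l, Measurable (τ t s i l)) {s : ℕ}
    (hs : 1 ≤ s) {t : ℕ} (ht : t ≤ q) (φ : (Fin n → E) × (Fin n → E) → ℝ) :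
    Integrable (fun ω => φ ((fun i => x t s i ω), fun i => v t s i ω)) μ :=
  ((((run.measurableFiniteRange_iterates hτ hs).1 t (by omega)).pair
    ((run.measurableFiniteRange_iterates hτ hs).2 t ht)).comp φ).integrable μ

theorem integral_apply_avg_x_le (μ : Measure Ω) [IsProbabilityMeasure μ]
    (run : IsRun q f fI W α τ x y v x0) (hτ : ∀ t s i l, Measurable (τ t s i l)) (hn : 1 ≤ n)
    (hW : ∀ r, ∑ i, W i r = 1) {F : E → ℝ} {L : ℝ} (hF : Differentiable ℝ F)
    (hgradF : ∀ z, gradient F z = (n : ℝ)⁻¹ • ∑ i, gradient (fI i) z)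
    (hlip : ∀ i u w, ‖gradient (fI i) u - gradient (fI i) w‖ ≤ L * ‖u - w‖)
    (hL : 0 ≤ L) (hα : 0 ≤ α) (hαL : α * L ≤ 1 / 2) (S : ℕ) (hS : 1 ≤ S) :
    ∫ ω, F ((n : ℝ)⁻¹ • ∑ i, x (q + 1) S i ω) ∂μ
      ≤ F x0
        - (α / 2) * ∑ s ∈ Icc 1 S, ∑ t ∈ range (q + 1),
            ∫ ω, ‖gradient F ((n : ℝ)⁻¹ • ∑ i, x t s i ω)‖ ^ 2 ∂μ
        - (α / 4) * ∑ s ∈ Icc 1 S, ∑ t ∈ range (q + 1),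
            ∫ ω, ‖(n : ℝ)⁻¹ • ∑ i, v (t : ℤ) s i ω‖ ^ 2 ∂μ
        + α * ∑ s ∈ Icc 1 S, ∑ t ∈ range (q + 1),
            ∫ ω, ‖(n : ℝ)⁻¹ • ∑ i, v (t : ℤ) s i ω
              - (n : ℝ)⁻¹ • ∑ i, gradient (fI i) (x t s i ω)‖ ^ 2 ∂μ
        + α * L ^ 2 * ∑ s ∈ Icc 1 S, ∑ t ∈ range (q + 1),
            ∫ ω, (∑ i, ‖x t s i ω - (n : ℝ)⁻¹ • ∑ i', x t s i' ω‖ ^ 2) / (n : ℝ) ∂μ := by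
  have hint : ∀ s ∈ Icc 1 S, ∀ t ∈ range (q + 1), ∀ φ : (Fin n → E) × (Fin n → E) → ℝ,
      Integrable (fun ω => φ ((fun i => x t s i ω), fun i => v t s i ω)) μ := fun s hs t ht =>
    run.integrable_comp_iterates μ hτ (mem_Icc.1 hs).1 (Nat.lt_succ_iff.1 (mem_range.1 ht))
  have hA : ∀ s ∈ Icc 1 S, ∀ t ∈ range (q + 1),
      Integrable (fun ω => ‖gradient F ((n : ℝ)⁻¹ • ∑ i, x t s i ω)‖ ^ 2) μ :=
    fun s hs t ht => hint s hs t ht fun z => ‖gradient F ((n : ℝ)⁻¹ • ∑ i, z.1 i)‖ ^ 2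
  have hB : ∀ s ∈ Icc 1 S, ∀ t ∈ range (q + 1),
      Integrable (fun ω => ‖(n : ℝ)⁻¹ • ∑ i, v (t : ℤ) s i ω‖ ^ 2) μ :=
    fun s hs t ht => hint s hs t ht fun z => ‖(n : ℝ)⁻¹ • ∑ i, z.2 i‖ ^ 2
  have hC : ∀ s ∈ Icc 1 S, ∀ t ∈ range (q + 1), Integrable (fun ω => ‖(n : ℝ)⁻¹ • ∑ i,
      v (t : ℤ) s i ω - (n : ℝ)⁻¹ • ∑ i, gradient (fI i) (x t s i ω)‖ ^ 2) μ :=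
    fun s hs t ht => hint s hs t ht fun z =>
      ‖(n : ℝ)⁻¹ • ∑ i, z.2 i - (n : ℝ)⁻¹ • ∑ i, gradient (fI i) (z.1 i)‖ ^ 2
  have hD : ∀ s ∈ Icc 1 S, ∀ t ∈ range (q + 1), Integrable
      (fun ω => (∑ i, ‖x t s i ω - (n : ℝ)⁻¹ • ∑ i', x t s i' ω‖ ^ 2) / (n : ℝ)) μ :=
    fun s hs t ht => hint s hs t ht fun z =>
      (∑ i, ‖z.1 i - (n : ℝ)⁻¹ • ∑ i', z.1 i'‖ ^ 2) / (n : ℝ)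
  have hlast : Integrable (fun ω => F ((n : ℝ)⁻¹ • ∑ i, x (q + 1) S i ω)) μ :=
    (((run.measurableFiniteRange_iterates hτ hS).1 (q + 1) le_rfl).comp fun z =>
      F ((n : ℝ)⁻¹ • ∑ i, z i)).integrable μ
  refine (integral_le_add_sum_sum_integral hlast (fun s hs t ht => ?_)
    (run.apply_avg_x_le hn hW hF hgradF hlip hL hα hαL · S hS)).trans_eq ?_
  · exact ((hA s hs t ht).const_mul _).fun_add (((hB s hs t ht).const_mul _).fun_add
      (((hC s hs t ht).const_mul _).fun_add ((hD s hs t ht).const_mul _)))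
  rw [sum_congr rfl fun s hs => sum_congr rfl fun t ht => by
    rw [integral_add ((hA s hs t ht).const_mul _) (((hB s hs t ht).const_mul _).fun_add
        (((hC s hs t ht).const_mul _).fun_add ((hD s hs t ht).const_mul _))),
      integral_add ((hB s hs t ht).const_mul _)
        (((hC s hs t ht).const_mul _).fun_add ((hD s hs t ht).const_mul _)),
      integral_add ((hC s hs t ht).const_mul _) ((hD s hs t ht).const_mul _),
      integral_const_mul, integral_const_mul, integral_const_mul, integral_const_mul]]
  simp only [sum_add_distrib, ← mul_sum]
  ring

end Measurability

end IsRun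

end GTSarah

theorem gt_sarah_descent_general
    {Ω : Type*} [MeasurableSpace Ω] (μ : Measure Ω) [IsProbabilityMeasure μ]
    (n m p q B : ℕ) (hn : 1 ≤ n)
    (α L : ℝ) (hα0 : 0 < α) (hL : 0 < L)
    (f : Fin n → Fin m → EuclideanSpace ℝ (Fin p) → ℝ)
    (hdiff : ∀ i j, Differentiable ℝ (f i j))
    (hsmooth : ∀ i (u w : EuclideanSpace ℝ (Fin p)),
      (m : ℝ)⁻¹ * ∑ j, ‖gradient (f i j) u - gradient (f i j) w‖ ^ 2 ≤ L ^ 2 * ‖u - w‖ ^ 2)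
    (fI : Fin n → EuclideanSpace ℝ (Fin p) → ℝ)
    (hfI : ∀ i, fI i = fun z => (m : ℝ)⁻¹ * ∑ j, f i j z)
    (F : EuclideanSpace ℝ (Fin p) → ℝ)
    (hF : F = fun z => (n : ℝ)⁻¹ * ∑ i, fI i z)
    (W : Matrix (Fin n) (Fin n) ℝ)
    (hWcol : ∀ r, ∑ i, W i r = 1)
    (τ : ℕ → ℕ → Fin n → Fin B → Ω → Fin m)
    (hτmeas : ∀ t s i l, Measurable (τ t s i l))
    (x y : ℕ → ℕ → Fin n → Ω → EuclideanSpace ℝ (Fin p))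
    (v : ℤ → ℕ → Fin n → Ω → EuclideanSpace ℝ (Fin p))
    (x0 : EuclideanSpace ℝ (Fin p))
    (hx0 : ∀ i ω, x 0 1 i ω = x0)
    (hy0 : ∀ i ω, y 0 1 i ω = 0)
    (hvm1 : ∀ i ω, v (-1) 1 i ω = 0)
    (hv0 : ∀ s, 1 ≤ s → ∀ i ω, v 0 s i ω = gradient (fI i) (x 0 s i ω))
    (hvrec : ∀ s, 1 ≤ s → ∀ t : ℕ, 1 ≤ t → t ≤ q → ∀ i ω,
      v (t : ℤ) s i ω = (B : ℝ)⁻¹ • (∑ l, (gradient (f i (τ t s i l ω)) (x t s i ω)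
        - gradient (f i (τ t s i l ω)) (x (t - 1) s i ω))) + v ((t : ℤ) - 1) s i ω)
    (hyrec : ∀ s, 1 ≤ s → ∀ t : ℕ, t ≤ q → ∀ i ω,
      y (t + 1) s i ω = (∑ r, W i r • y t s r ω) + v (t : ℤ) s i ω - v ((t : ℤ) - 1) s i ω)
    (hxrec : ∀ s, 1 ≤ s → ∀ t : ℕ, t ≤ q → ∀ i ω,
      x (t + 1) s i ω = (∑ r, W i r • x t s r ω) - α • y (t + 1) s i ω)
    (hxcarry : ∀ s, 1 ≤ s → ∀ i ω, x 0 (s + 1) i ω = x (q + 1) s i ω)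
    (hycarry : ∀ s, 1 ≤ s → ∀ i ω, y 0 (s + 1) i ω = y (q + 1) s i ω)
    (hvcarry : ∀ s, 1 ≤ s → ∀ i ω, v (-1) (s + 1) i ω = v (q : ℤ) s i ω)
    (hα2 : α ≤ 1 / (2 * L)) (S : ℕ) (hS : 1 ≤ S) :
    ∫ ω, F ((n : ℝ)⁻¹ • ∑ i, x (q + 1) S i ω) ∂μ
      ≤ F x0
        - (α / 2) * ∑ s ∈ Icc 1 S, ∑ t ∈ range (q + 1),
            ∫ ω, ‖gradient F ((n : ℝ)⁻¹ • ∑ i, x t s i ω)‖ ^ 2 ∂μ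
        - (α / 4) * ∑ s ∈ Icc 1 S, ∑ t ∈ range (q + 1),
            ∫ ω, ‖(n : ℝ)⁻¹ • ∑ i, v (t : ℤ) s i ω‖ ^ 2 ∂μ
        + α * ∑ s ∈ Icc 1 S, ∑ t ∈ range (q + 1),
            ∫ ω, ‖(n : ℝ)⁻¹ • ∑ i, v (t : ℤ) s i ω
              - (n : ℝ)⁻¹ • ∑ i, gradient (fI i) (x t s i ω)‖ ^ 2 ∂μ
        + α * L ^ 2 * ∑ s ∈ Icc 1 S, ∑ t ∈ range (q + 1),
            ∫ ω, (∑ i, ‖x t s i ω - (n : ℝ)⁻¹ • ∑ i', x t s i' ω‖ ^ 2) / (n : ℝ) ∂μ := by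
  have hαL : α * L ≤ 1 / 2 := by
    rw [le_div_iff₀ (by positivity)] at hα2
    linarith
  have hdfI : ∀ i, Differentiable ℝ (fI i) := fun i =>
    hfI i ▸ (Differentiable.fun_sum fun j _ => hdiff i j).const_mul _
  have hdF : Differentiable ℝ F := hF ▸ (Differentiable.fun_sum fun i _ => hdfI i).const_mul _
  have hgradF : ∀ z, gradient F z = (n : ℝ)⁻¹ • ∑ i, gradient (fI i) z := fun z => by
    rw [hF]
    exact gradient_const_mul_sum _ _ fun i _ => (hdfI i).differentiableAt
  have hlip : ∀ i u w, ‖gradient (fI i) u - gradient (fI i) w‖ ≤ L * ‖u - w‖ := fun i u w => by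
    refine (pow_le_pow_iff_left₀ (norm_nonneg _) (by positivity) two_ne_zero).1 ?_
    rw [hfI, gradient_const_mul_sum _ _ fun j _ => (hdiff i j).differentiableAt,
      gradient_const_mul_sum _ _ fun j _ => (hdiff i j).differentiableAt, mul_pow]
    have h := norm_avg_sub_avg_sq_le (fun j => gradient (f i j) u) fun j => gradient (f i j) w
    rw [Fintype.card_fin] at h
    exact h.trans (hsmooth i u w)
  have run : GTSarah.IsRun q f fI W α τ x y v x0 :=
    ⟨hx0, hy0, hvm1, hv0, hvrec, hyrec, hxrec, hxcarry, hycarry, hvcarry⟩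
  exact run.integral_apply_avg_x_le μ hτmeas hn hWcol hdF hgradF hlip hL.le hα0.le hαL S hS

/-- GT-SARAH setup. -/
theorem gt_sarah_descent
    {Ω : Type*} [MeasurableSpace Ω] (μ : Measure Ω) [IsProbabilityMeasure μ]
    (n m p q B : ℕ) (hn : 1 ≤ n) (hm : 1 ≤ m) (hp : 1 ≤ p) (hq : 1 ≤ q)
    (hB1 : 1 ≤ B) (hBm : B ≤ m)
    (α L : ℝ) (hα0 : 0 < α) (hL : 0 < L)
    (f : Fin n → Fin m → EuclideanSpace ℝ (Fin p) → ℝ)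
    (hdiff : ∀ i j, Differentiable ℝ (f i j))
    (hsmooth : ∀ i (u w : EuclideanSpace ℝ (Fin p)),
      (m : ℝ)⁻¹ * ∑ j, ‖gradient (f i j) u - gradient (f i j) w‖ ^ 2 ≤ L ^ 2 * ‖u - w‖ ^ 2)
    (fI : Fin n → EuclideanSpace ℝ (Fin p) → ℝ)
    (hfI : ∀ i, fI i = fun z => (m : ℝ)⁻¹ * ∑ j, f i j z)
    (F : EuclideanSpace ℝ (Fin p) → ℝ)
    (hF : F = fun z => (n : ℝ)⁻¹ * ∑ i, fI i z)
    (Fstar : ℝ) (hFbdd : BddBelow (Set.range F)) (hFstar : Fstar = sInf (Set.range F))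
    (W : Matrix (Fin n) (Fin n) ℝ)
    (hWnonneg : ∀ i r, 0 ≤ W i r) (hWdiag : ∀ i, 0 < W i i)
    (hWprim : ∃ k : ℕ, 0 < k ∧ ∀ i r, 0 < (W ^ k) i r)
    (hWrow : ∀ i, ∑ r, W i r = 1) (hWcol : ∀ r, ∑ i, W i r = 1)
    (lam : ℝ)
    (hlam : lam = ‖(Matrix.toEuclideanCLM (𝕜 := ℝ) (W - Matrix.of fun _ _ => (n : ℝ)⁻¹) :
      EuclideanSpace ℝ (Fin n) →L[ℝ] EuclideanSpace ℝ (Fin n))‖)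
    (hlam0 : 0 ≤ lam) (hlam1 : lam < 1)
    (τ : ℕ → ℕ → Fin n → Fin B → Ω → Fin m)
    (hτmeas : ∀ t s i l, Measurable (τ t s i l))
    (hτindep : ProbabilityTheory.iIndepFun
      (fun idx : {u : ℕ × ℕ // 1 ≤ u.1 ∧ u.1 ≤ q ∧ 1 ≤ u.2} × Fin n × Fin B =>
        τ idx.1.1.1 idx.1.1.2 idx.2.1 idx.2.2) μ)
    (hτunif : ∀ t s (i : Fin n) (l : Fin B), 1 ≤ t → t ≤ q → 1 ≤ s → ∀ j : Fin m,
      μ (τ t s i l ⁻¹' {j}) = 1 / (m : ENNReal))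
    (x y : ℕ → ℕ → Fin n → Ω → EuclideanSpace ℝ (Fin p))
    (v : ℤ → ℕ → Fin n → Ω → EuclideanSpace ℝ (Fin p))
    (x0 : EuclideanSpace ℝ (Fin p))
    (hx0 : ∀ i ω, x 0 1 i ω = x0)
    (hy0 : ∀ i ω, y 0 1 i ω = 0)
    (hvm1 : ∀ i ω, v (-1) 1 i ω = 0)
    (hv0 : ∀ s, 1 ≤ s → ∀ i ω, v 0 s i ω = gradient (fI i) (x 0 s i ω))
    (hvrec : ∀ s, 1 ≤ s → ∀ t : ℕ, 1 ≤ t → t ≤ q → ∀ i ω,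
      v (t : ℤ) s i ω = (B : ℝ)⁻¹ • (∑ l, (gradient (f i (τ t s i l ω)) (x t s i ω)
        - gradient (f i (τ t s i l ω)) (x (t - 1) s i ω))) + v ((t : ℤ) - 1) s i ω)
    (hyrec : ∀ s, 1 ≤ s → ∀ t : ℕ, t ≤ q → ∀ i ω,
      y (t + 1) s i ω = (∑ r, W i r • y t s r ω) + v (t : ℤ) s i ω - v ((t : ℤ) - 1) s i ω)
    (hxrec : ∀ s, 1 ≤ s → ∀ t : ℕ, t ≤ q → ∀ i ω,
      x (t + 1) s i ω = (∑ r, W i r • x t s r ω) - α • y (t + 1) s i ω)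
    (hxcarry : ∀ s, 1 ≤ s → ∀ i ω, x 0 (s + 1) i ω = x (q + 1) s i ω)
    (hycarry : ∀ s, 1 ≤ s → ∀ i ω, y 0 (s + 1) i ω = y (q + 1) s i ω)
    (hvcarry : ∀ s, 1 ≤ s → ∀ i ω, v (-1) (s + 1) i ω = v (q : ℤ) s i ω)
    (hα2 : α ≤ 1 / (2 * L)) (S : ℕ) (hS : 1 ≤ S) :
    ∫ ω, F ((n : ℝ)⁻¹ • ∑ i, x (q + 1) S i ω) ∂μ
      ≤ F x0
        - (α / 2) * ∑ s ∈ Icc 1 S, ∑ t ∈ range (q + 1),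
            ∫ ω, ‖gradient F ((n : ℝ)⁻¹ • ∑ i, x t s i ω)‖ ^ 2 ∂μ
        - (α / 4) * ∑ s ∈ Icc 1 S, ∑ t ∈ range (q + 1),
            ∫ ω, ‖(n : ℝ)⁻¹ • ∑ i, v (t : ℤ) s i ω‖ ^ 2 ∂μ
        + α * ∑ s ∈ Icc 1 S, ∑ t ∈ range (q + 1),
            ∫ ω, ‖(n : ℝ)⁻¹ • ∑ i, v (t : ℤ) s i ω
              - (n : ℝ)⁻¹ • ∑ i, gradient (fI i) (x t s i ω)‖ ^ 2 ∂μ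
        + α * L ^ 2 * ∑ s ∈ Icc 1 S, ∑ t ∈ range (q + 1),
            ∫ ω, (∑ i, ‖x t s i ω - (n : ℝ)⁻¹ • ∑ i', x t s i' ω‖ ^ 2) / (n : ℝ) ∂μ :=
  gt_sarah_descent_general μ n m p q B hn α L hα0 hL f hdiff hsmooth fI hfI F hF W hWcol τ hτmeas x
    y v x0 hx0 hy0 hvm1 hv0 hvrec hyrec hxrec hxcarry hycarry hvcarry hα2 S hS
end

section
/- Under the GT-SARAH setup, for all s ≥ 1 and t ∈ {1,…,q}: E[‖v̄^{t,s} − ∇f̄(x^{t,s})‖²] ≤ (3α²L²/(nB)) Σ_{u=0}^{t−1} E[‖v̄^{u,s}‖²] + (6L²/(n²B)) Σ_{u=0}^{t} E[‖x^{u,s} − J x^{u,s}‖²]. -/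
/-!
All randomness that epochs `1, …, s` see is the finite sample vector
`θ : Fin q × Fin s × Fin n × Fin B → Fin m` of independent uniform indices, so expectations are
uniform averages over `θ`, and every iterate is a function of `θ` that ignores the samples drawn
at or after the step where it is computed. Since `W` is column stochastic, gradient tracking
gives `x̄^{u+1} = x̄^u - α v̄^u`. Telescoping the SARAH recursion writes `v̄^t - ∇f̄(x^t)` as
`(nB)⁻¹` times a sum of centred noises, one per sample slot `(u, i, l)`. Resampling the later of
two slots shows that the noises are orthogonal, and resampling its own slot bounds the second
moment of each by `L² E‖x_i^{u+1} - x_i^u‖²`. Splitting `x_i^{u+1} - x_i^u` into two consensus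
errors and the mean step `-α v̄^u` gives the constants `3` and `6`.
-/

open MeasureTheory ProbabilityTheory Finset

section FiniteProduct

variable {ι κ : Type*} [Fintype ι] [DecidableEq ι] [Fintype κ]

theorem sum_sum_update {M : Type*} [AddCommMonoid M] (F : (ι → κ) → M) (c : ι) :
    ∑ θ, ∑ j, F (Function.update θ c j) = Fintype.card κ • ∑ θ, F θ := by
  -- `(θ, j) ↦ (update θ c j, θ c)` is an involution of `(ι → κ) × κ`
  let e : Equiv.Perm ((ι → κ) × κ) :=
    Function.Involutive.toPerm (fun p => (Function.update p.1 c p.2, p.1 c)) fun p => by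
      simp only [Function.update_idem, Function.update_eq_self, Function.update_self]
  calc ∑ θ, ∑ j, F (Function.update θ c j) = ∑ p, F (e p).1 :=
        (Fintype.sum_prod_type' (fun θ j => F (Function.update θ c j))).symm
    _ = ∑ p : (ι → κ) × κ, F p.1 := Equiv.sum_comp (e : _ ≃ _) fun p => F p.1
    _ = Fintype.card κ • ∑ θ, F θ := by
      rw [Fintype.sum_prod_type' (fun θ (_ : κ) => F θ), ← Finset.sum_nsmul]
      simp only [Finset.sum_const, Finset.card_univ]

theorem sum_inner_eq_zero_of_update [Nonempty κ] {E : Type*} [NormedAddCommGroup E]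
    [InnerProductSpace ℝ E] (A H : (ι → κ) → E) (c : ι)
    (hA : ∀ θ j, A (Function.update θ c j) = A θ)
    (hH : ∀ θ, ∑ j, H (Function.update θ c j) = 0) :
    ∑ θ, inner ℝ (A θ) (H θ) = 0 := by
  have h := sum_sum_update (fun θ => inner ℝ (A θ) (H θ)) c
  simp only [hA, ← inner_sum, hH, inner_zero_right, Finset.sum_const_zero] at h
  exact (smul_eq_zero.1 h.symm).resolve_left Fintype.card_ne_zero

end FiniteProduct

theorem norm_add_add_sq_le {E : Type*} [SeminormedAddCommGroup E] (a b c : E) :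
    ‖a + b + c‖ ^ 2 ≤ 3 * ‖a‖ ^ 2 + 3 * ‖b‖ ^ 2 + 3 * ‖c‖ ^ 2 := by
  have h : ‖a + b + c‖ ≤ ‖a‖ + ‖b‖ + ‖c‖ := norm_add₃_le
  nlinarith [norm_nonneg (a + b + c), sq_nonneg (‖a‖ - ‖b‖), sq_nonneg (‖a‖ - ‖c‖),
    sq_nonneg (‖b‖ - ‖c‖)]

section InnerProductSpace

variable {E : Type*} [NormedAddCommGroup E] [InnerProductSpace ℝ E]

theorem sum_norm_sum_sq_of_pairwise_orthogonal {Θ α : Type*} [Fintype Θ] (s : Finset α)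
    (Z : α → Θ → E) (h : (s : Set α).Pairwise fun a b => ∑ θ, inner ℝ (Z a θ) (Z b θ) = 0) :
    ∑ θ, ‖∑ a ∈ s, Z a θ‖ ^ 2 = ∑ a ∈ s, ∑ θ, ‖Z a θ‖ ^ 2 := by
  calc ∑ θ, ‖∑ a ∈ s, Z a θ‖ ^ 2 = ∑ θ, ∑ a ∈ s, ∑ b ∈ s, inner ℝ (Z a θ) (Z b θ) := by
        simp only [← real_inner_self_eq_norm_sq, sum_inner, inner_sum]
        exact Finset.sum_congr rfl fun _ _ => Finset.sum_comm
    _ = ∑ a ∈ s, ∑ b ∈ s, ∑ θ, inner ℝ (Z a θ) (Z b θ) := by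
        rw [Finset.sum_comm]
        exact Finset.sum_congr rfl fun _ _ => Finset.sum_comm
    _ = ∑ a ∈ s, ∑ θ, ‖Z a θ‖ ^ 2 := by
      refine Finset.sum_congr rfl fun a ha => ?_
      rw [Finset.sum_eq_single_of_mem a ha fun b hb hba => h ha hb hba.symm]
      simp only [real_inner_self_eq_norm_sq]

theorem sum_norm_sub_mean_sq_le {m : ℕ} (d : Fin m → E) :
    ∑ j, ‖d j - (m : ℝ)⁻¹ • ∑ j', d j'‖ ^ 2 ≤ ∑ j, ‖d j‖ ^ 2 := by
  rcases Nat.eq_zero_or_pos m with rfl | hm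
  · simp
  set a := (m : ℝ)⁻¹ • ∑ j', d j'
  have hsum : ∑ j, d j = (m : ℝ) • a := by
    rw [smul_smul, mul_inv_cancel₀ (by positivity), one_smul]
  have : ∑ j, ‖d j - a‖ ^ 2 = ∑ j, ‖d j‖ ^ 2 - m * ‖a‖ ^ 2 := by
    simp only [norm_sub_sq_real, Finset.sum_add_distrib, Finset.sum_sub_distrib, ← Finset.mul_sum,
      ← sum_inner, hsum, real_inner_smul_left, real_inner_self_eq_norm_sq]
    simp only [Finset.sum_const, Finset.card_univ, Fintype.card_fin, nsmul_eq_mul]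
    ring
  rw [this]
  nlinarith [sq_nonneg ‖a‖, (Nat.cast_pos.2 hm : (0 : ℝ) < m)]

noncomputable def consensusError {n : ℕ} (x : Fin n → E) : ℝ :=
  ∑ i, ‖x i - (n : ℝ)⁻¹ • ∑ i', x i'‖ ^ 2

theorem consensusError_nonneg {n : ℕ} (x : Fin n → E) : 0 ≤ consensusError x :=
  Finset.sum_nonneg fun _ _ => by positivity

theorem sum_norm_sub_sq_le_of_sum_eq {n : ℕ} (x x' : Fin n → E) (α : ℝ) (w : E)
    (h : ∑ i, x' i = ∑ i, x i - α • w) :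
    ∑ i, ‖x' i - x i‖ ^ 2
      ≤ 3 * consensusError x' + 3 * consensusError x + 3 * (n * (α ^ 2 * ‖(n : ℝ)⁻¹ • w‖ ^ 2)) := by
  have hmean : (n : ℝ)⁻¹ • ∑ i', x' i' - (n : ℝ)⁻¹ • ∑ i', x i' = -(α • (n : ℝ)⁻¹ • w) := by
    rw [h, smul_sub, smul_comm]
    abel
  calc ∑ i, ‖x' i - x i‖ ^ 2
      = ∑ i, ‖(x' i - (n : ℝ)⁻¹ • ∑ i', x' i') + -(x i - (n : ℝ)⁻¹ • ∑ i', x i')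
          + ((n : ℝ)⁻¹ • ∑ i', x' i' - (n : ℝ)⁻¹ • ∑ i', x i')‖ ^ 2 :=
        Finset.sum_congr rfl fun i _ => by congr 2; abel
    _ ≤ ∑ i, (3 * ‖x' i - (n : ℝ)⁻¹ • ∑ i', x' i'‖ ^ 2 + 3 * ‖x i - (n : ℝ)⁻¹ • ∑ i', x i'‖ ^ 2
          + 3 * (α ^ 2 * ‖(n : ℝ)⁻¹ • w‖ ^ 2)) := by
        gcongr with i
        refine (norm_add_add_sq_le _ _ _).trans_eq ?_
        rw [norm_neg, hmean, norm_neg, norm_smul, mul_pow, Real.norm_eq_abs, sq_abs]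
    _ = _ := by
        simp only [consensusError, Finset.sum_add_distrib, ← Finset.mul_sum, Finset.sum_const,
          Finset.card_univ, Fintype.card_fin, nsmul_eq_mul]
        ring

end InnerProductSpace

section SarahEstimator

variable {E : Type*} [NormedAddCommGroup E] [InnerProductSpace ℝ E]

section CenteredIncrement

variable {m : ℕ} (h : Fin m → E → E) (x x' : E)

noncomputable def centeredIncrement (j : Fin m) : E :=
  (h j x - h j x') - (m : ℝ)⁻¹ • ∑ j', (h j' x - h j' x')

theorem sum_centeredIncrement : ∑ j, centeredIncrement h x x' j = 0 := by
  rcases Nat.eq_zero_or_pos m with rfl | hm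
  · simp
  simp only [centeredIncrement, Finset.sum_sub_distrib, Finset.sum_const, Finset.card_univ,
    Fintype.card_fin, ← Nat.cast_smul_eq_nsmul ℝ, smul_smul]
  rw [mul_inv_cancel₀ (by positivity), one_smul, sub_self]

theorem sum_norm_centeredIncrement_sq_le {L : ℝ}
    (hL : (m : ℝ)⁻¹ * ∑ j, ‖h j x - h j x'‖ ^ 2 ≤ L ^ 2 * ‖x - x'‖ ^ 2) :
    ∑ j, ‖centeredIncrement h x x' j‖ ^ 2 ≤ m * (L ^ 2 * ‖x - x'‖ ^ 2) := by
  rcases Nat.eq_zero_or_pos m with rfl | hm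
  · simp
  calc ∑ j, ‖centeredIncrement h x x' j‖ ^ 2 ≤ ∑ j, ‖h j x - h j x'‖ ^ 2 :=
        sum_norm_sub_mean_sq_le _
    _ = m * ((m : ℝ)⁻¹ * ∑ j, ‖h j x - h j x'‖ ^ 2) := by field_simp
    _ ≤ m * (L ^ 2 * ‖x - x'‖ ^ 2) := by gcongr

end CenteredIncrement

variable {ι : Type*} {n m B : ℕ} (g : Fin n → Fin m → E → E) (κ : ℕ × Fin n × Fin B → ι)
  (X V : ℕ → Fin n → (ι → Fin m) → E)

/-- The noise that sample slot `a = (u, i, l)`, read at coordinate `κ a` of `θ`, adds to `V · i`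
in the step from `u` to `u + 1`. -/
noncomputable def sarahNoise (a : ℕ × Fin n × Fin B) (θ : ι → Fin m) : E :=
  centeredIncrement (g a.2.1) (X (a.1 + 1) a.2.1 θ) (X a.1 a.2.1 θ) (θ (κ a))

theorem sarahNoise_update [DecidableEq ι] {a : ℕ × Fin n × Fin B} {c : ι}
    (hX : ∀ w ≤ a.1 + 1, ∀ θ j, X w a.2.1 (Function.update θ c j) = X w a.2.1 θ) (θ j) :
    sarahNoise g κ X a (Function.update θ c j)
      = centeredIncrement (g a.2.1) (X (a.1 + 1) a.2.1 θ) (X a.1 a.2.1 θ)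
          (Function.update θ c j (κ a)) := by
  rw [sarahNoise, hX _ le_rfl, hX _ (Nat.le_succ _)]

theorem sum_inner_sarahNoise_eq_zero [Fintype ι] [DecidableEq ι] [NeZero m]
    {a b : ℕ × Fin n × Fin B} (hab : κ a ≠ κ b) (hle : a.1 ≤ b.1)
    (hX : ∀ w ≤ b.1 + 1, ∀ i θ j, X w i (Function.update θ (κ b) j) = X w i θ) :
    ∑ θ, inner ℝ (sarahNoise g κ X a θ) (sarahNoise g κ X b θ) = 0 := by
  refine sum_inner_eq_zero_of_update _ _ (κ b) (fun θ j => ?_) fun θ => ?_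
  · rw [sarahNoise_update g κ X (fun w hw => hX w (by omega) _), Function.update_of_ne hab]
    rfl
  · simp only [sarahNoise_update g κ X (fun w hw => hX w hw _), Function.update_self]
    exact sum_centeredIncrement _ _ _

theorem sum_norm_sarahNoise_sq_le [Fintype ι] [DecidableEq ι] [NeZero m] {L : ℝ}
    (hsmooth : ∀ i x y, (m : ℝ)⁻¹ * ∑ j, ‖g i j x - g i j y‖ ^ 2 ≤ L ^ 2 * ‖x - y‖ ^ 2)
    {a : ℕ × Fin n × Fin B}
    (hX : ∀ w ≤ a.1 + 1, ∀ i θ j, X w i (Function.update θ (κ a) j) = X w i θ) :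
    ∑ θ, ‖sarahNoise g κ X a θ‖ ^ 2 ≤ L ^ 2 * ∑ θ, ‖X (a.1 + 1) a.2.1 θ - X a.1 a.2.1 θ‖ ^ 2 := by
  have key := sum_sum_update (fun θ => ‖sarahNoise g κ X a θ‖ ^ 2) (κ a)
  simp only [sarahNoise_update g κ X (fun w hw => hX w hw _), Function.update_self,
    Fintype.card_fin, nsmul_eq_mul] at key
  have hm : (0 : ℝ) < m := by exact_mod_cast Nat.pos_of_ne_zero (NeZero.ne m)
  refine le_of_mul_le_mul_left ?_ hm
  rw [← key, Finset.mul_sum, Finset.mul_sum]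
  exact Finset.sum_le_sum fun θ _ => sum_norm_centeredIncrement_sq_le _ _ _ (hsmooth _ _ _)

theorem sub_eq_sum_sarahNoise (hB : B ≠ 0) {t : ℕ}
    (hV : ∀ u < t, ∀ i θ, V (u + 1) i θ = (B : ℝ)⁻¹ • ∑ l, (g i (θ (κ (u, i, l))) (X (u + 1) i θ)
      - g i (θ (κ (u, i, l))) (X u i θ)) + V u i θ)
    (hV0 : ∀ i θ, V 0 i θ = (m : ℝ)⁻¹ • ∑ j, g i j (X 0 i θ)) :
    ∀ w ≤ t, ∀ i θ, V w i θ - (m : ℝ)⁻¹ • ∑ j, g i j (X w i θ)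
      = (B : ℝ)⁻¹ • ∑ u ∈ range w, ∑ l, sarahNoise g κ X (u, i, l) θ := by
  intro w
  induction w with
  | zero => intro _ i θ; simp [hV0]
  | succ u ih =>
    intro hu i θ
    have hsum : ∑ l, sarahNoise g κ X (u, i, l) θ
        = ∑ l, (g i (θ (κ (u, i, l))) (X (u + 1) i θ) - g i (θ (κ (u, i, l))) (X u i θ))
          - (B : ℝ) • ((m : ℝ)⁻¹ • ∑ j, (g i j (X (u + 1) i θ) - g i j (X u i θ))) := by
      simp only [sarahNoise, centeredIncrement, Finset.sum_sub_distrib, Finset.sum_const,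
        Finset.card_univ, Fintype.card_fin, Nat.cast_smul_eq_nsmul]
    rw [Finset.sum_range_succ, smul_add, ← ih (by omega), hsum, hV u (by omega), smul_sub,
      smul_smul, inv_mul_cancel₀ (Nat.cast_ne_zero.2 hB), one_smul]
    simp only [Finset.sum_sub_distrib, smul_sub]
    abel

theorem mean_sub_mean_eq_sum_sarahNoise (hB : B ≠ 0) {t : ℕ}
    (hV : ∀ u < t, ∀ i θ, V (u + 1) i θ = (B : ℝ)⁻¹ • ∑ l, (g i (θ (κ (u, i, l))) (X (u + 1) i θ)
      - g i (θ (κ (u, i, l))) (X u i θ)) + V u i θ)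
    (hV0 : ∀ i θ, V 0 i θ = (m : ℝ)⁻¹ • ∑ j, g i j (X 0 i θ)) (θ : ι → Fin m) :
    (n : ℝ)⁻¹ • ∑ i, V t i θ - (n : ℝ)⁻¹ • ∑ i, (m : ℝ)⁻¹ • ∑ j, g i j (X t i θ)
      = ((n : ℝ)⁻¹ * (B : ℝ)⁻¹) • ∑ a ∈ range t ×ˢ univ, sarahNoise g κ X a θ := by
  rw [← smul_sub, ← Finset.sum_sub_distrib,
    Finset.sum_congr rfl fun i _ => sub_eq_sum_sarahNoise g κ X V hB hV hV0 t le_rfl i θ,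
    ← Finset.smul_sum, smul_smul, Finset.sum_product, Finset.sum_comm]
  simp only [Fintype.sum_prod_type]

theorem sum_sq_sarahError_le_sum_sq_increment [Fintype ι] [DecidableEq ι] [NeZero m]
    (hB : B ≠ 0) {t : ℕ} {L : ℝ}
    (hsmooth : ∀ i x y, (m : ℝ)⁻¹ * ∑ j, ‖g i j x - g i j y‖ ^ 2 ≤ L ^ 2 * ‖x - y‖ ^ 2)
    (hκ : Set.InjOn κ (range t ×ˢ univ : Finset (ℕ × Fin n × Fin B)))
    (hX : ∀ a ∈ (range t ×ˢ univ : Finset (ℕ × Fin n × Fin B)), ∀ w ≤ a.1 + 1, ∀ i θ j,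
      X w i (Function.update θ (κ a) j) = X w i θ)
    (hV : ∀ u < t, ∀ i θ, V (u + 1) i θ = (B : ℝ)⁻¹ • ∑ l, (g i (θ (κ (u, i, l))) (X (u + 1) i θ)
      - g i (θ (κ (u, i, l))) (X u i θ)) + V u i θ)
    (hV0 : ∀ i θ, V 0 i θ = (m : ℝ)⁻¹ • ∑ j, g i j (X 0 i θ)) :
    ∑ θ, ‖(n : ℝ)⁻¹ • ∑ i, V t i θ - (n : ℝ)⁻¹ • ∑ i, (m : ℝ)⁻¹ • ∑ j, g i j (X t i θ)‖ ^ 2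
      ≤ L ^ 2 / ((n : ℝ) ^ 2 * B) *
          ∑ u ∈ range t, ∑ θ, ∑ i, ‖X (u + 1) i θ - X u i θ‖ ^ 2 := by
  set K : Finset (ℕ × Fin n × Fin B) := range t ×ˢ univ
  set Z := sarahNoise g κ X
  have horth : (K : Set _).Pairwise fun a b => ∑ θ, inner ℝ (Z a θ) (Z b θ) = 0 := by
    intro a ha b hb hab
    rcases le_total a.1 b.1 with hle | hle
    · exact sum_inner_sarahNoise_eq_zero g κ X (hκ.ne ha hb hab) hle (hX b hb)
    · rw [← sum_inner_sarahNoise_eq_zero g κ X (hκ.ne hb ha hab.symm) hle (hX a ha)]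
      exact Finset.sum_congr rfl fun θ _ => real_inner_comm _ _
  calc ∑ θ, ‖(n : ℝ)⁻¹ • ∑ i, V t i θ - (n : ℝ)⁻¹ • ∑ i, (m : ℝ)⁻¹ • ∑ j, g i j (X t i θ)‖ ^ 2
      = ((n : ℝ)⁻¹ * (B : ℝ)⁻¹) ^ 2 * ∑ a ∈ K, ∑ θ, ‖Z a θ‖ ^ 2 := by
        simp only [mean_sub_mean_eq_sum_sarahNoise g κ X V hB hV hV0, norm_smul, mul_pow,
          Real.norm_eq_abs, sq_abs, ← Finset.mul_sum]
        exact congrArg _ (sum_norm_sum_sq_of_pairwise_orthogonal K Z horth)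
    _ ≤ ((n : ℝ)⁻¹ * (B : ℝ)⁻¹) ^ 2 *
          ∑ a ∈ K, L ^ 2 * ∑ θ, ‖X (a.1 + 1) a.2.1 θ - X a.1 a.2.1 θ‖ ^ 2 := by
        gcongr with a ha
        exact sum_norm_sarahNoise_sq_le g κ X hsmooth (hX a ha)
    _ = L ^ 2 / ((n : ℝ) ^ 2 * B) * ∑ u ∈ range t, ∑ θ, ∑ i, ‖X (u + 1) i θ - X u i θ‖ ^ 2 := by
        simp only [K, Finset.sum_product, Fintype.sum_prod_type, Finset.sum_const,
          Finset.card_univ, Fintype.card_fin, nsmul_eq_mul, ← Finset.mul_sum]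
        rw [Finset.sum_congr rfl fun u _ => Finset.sum_comm]
        field_simp

theorem sum_sq_sarahError_le [Fintype ι] [DecidableEq ι] [NeZero m] (hn : n ≠ 0) (hB : B ≠ 0)
    {t : ℕ} {α L : ℝ}
    (hsmooth : ∀ i x y, (m : ℝ)⁻¹ * ∑ j, ‖g i j x - g i j y‖ ^ 2 ≤ L ^ 2 * ‖x - y‖ ^ 2)
    (hκ : Set.InjOn κ (range t ×ˢ univ : Finset (ℕ × Fin n × Fin B)))
    (hX : ∀ a ∈ (range t ×ˢ univ : Finset (ℕ × Fin n × Fin B)), ∀ w ≤ a.1 + 1, ∀ i θ j,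
      X w i (Function.update θ (κ a) j) = X w i θ)
    (hV : ∀ u < t, ∀ i θ, V (u + 1) i θ = (B : ℝ)⁻¹ • ∑ l, (g i (θ (κ (u, i, l))) (X (u + 1) i θ)
      - g i (θ (κ (u, i, l))) (X u i θ)) + V u i θ)
    (hV0 : ∀ i θ, V 0 i θ = (m : ℝ)⁻¹ • ∑ j, g i j (X 0 i θ))
    (hXbar : ∀ u < t, ∀ θ, ∑ i, X (u + 1) i θ = ∑ i, X u i θ - α • ∑ i, V u i θ) :
    ∑ θ, ‖(n : ℝ)⁻¹ • ∑ i, V t i θ - (n : ℝ)⁻¹ • ∑ i, (m : ℝ)⁻¹ • ∑ j, g i j (X t i θ)‖ ^ 2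
      ≤ (3 * α ^ 2 * L ^ 2 / ((n : ℝ) * B)) * ∑ u ∈ range t, ∑ θ, ‖(n : ℝ)⁻¹ • ∑ i, V u i θ‖ ^ 2
        + (6 * L ^ 2 / ((n : ℝ) ^ 2 * B)) *
          ∑ u ∈ range (t + 1), ∑ θ, consensusError fun i => X u i θ := by
  set C : ℕ → ℝ := fun u => ∑ θ, consensusError fun i => X u i θ
  set D : ℕ → ℝ := fun u => ∑ θ, ‖(n : ℝ)⁻¹ • ∑ i, V u i θ‖ ^ 2
  have hstep : ∀ u ∈ range t, ∑ θ, ∑ i, ‖X (u + 1) i θ - X u i θ‖ ^ 2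
      ≤ 3 * C (u + 1) + 3 * C u + 3 * (n * (α ^ 2 * D u)) := fun u hu => by
    refine (Finset.sum_le_sum fun θ _ =>
      sum_norm_sub_sq_le_of_sum_eq _ _ α _ (hXbar u (Finset.mem_range.1 hu) θ)).trans_eq ?_
    simp only [C, D, Finset.sum_add_distrib, ← Finset.mul_sum]
  have hC0 : ∀ u, 0 ≤ C u := fun u => Finset.sum_nonneg fun θ _ => consensusError_nonneg _
  have hC : ∑ u ∈ range t, C (u + 1) + ∑ u ∈ range t, C u
      ≤ ∑ u ∈ range (t + 1), C u + ∑ u ∈ range (t + 1), C u := by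
    refine add_le_add ?_ ?_
    · rw [Finset.sum_range_succ' C]
      linarith [hC0 0]
    · rw [Finset.sum_range_succ C]
      linarith [hC0 t]
  have hc : 0 ≤ L ^ 2 / ((n : ℝ) ^ 2 * B) := by positivity
  have hn' : (n : ℝ) ≠ 0 := Nat.cast_ne_zero.2 hn
  calc _ ≤ L ^ 2 / ((n : ℝ) ^ 2 * B) * ∑ u ∈ range t, ∑ θ, ∑ i, ‖X (u + 1) i θ - X u i θ‖ ^ 2 :=
        sum_sq_sarahError_le_sum_sq_increment g κ X V hB hsmooth hκ hX hV hV0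
    _ ≤ L ^ 2 / ((n : ℝ) ^ 2 * B) *
          ∑ u ∈ range t, (3 * C (u + 1) + 3 * C u + 3 * (n * (α ^ 2 * D u))) := by
        gcongr with u hu
        exact hstep u hu
    _ ≤ _ := by
        rw [show 3 * α ^ 2 * L ^ 2 / ((n : ℝ) * B) = L ^ 2 / ((n : ℝ) ^ 2 * B) * (3 * n * α ^ 2)
            by field_simp,
          show 6 * L ^ 2 / ((n : ℝ) ^ 2 * B) = L ^ 2 / ((n : ℝ) ^ 2 * B) * 6 by ring,
          Finset.sum_add_distrib, Finset.sum_add_distrib, ← Finset.mul_sum, ← Finset.mul_sum,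
          ← Finset.mul_sum, ← Finset.mul_sum, ← Finset.mul_sum]
        nlinarith [mul_le_mul_of_nonneg_left hC hc]

end SarahEstimator

section FiniteLaw

variable {Ω : Type*} [MeasurableSpace Ω] {μ : Measure Ω}

theorem ProbabilityTheory.iIndepFun.measure_preimage_singleton_eq_pow [IsProbabilityMeasure μ]
    {ι κ : Type*} [Fintype ι] [MeasurableSpace κ] [MeasurableSingletonClass κ] {ξ : ι → Ω → κ}
    (hmeas : ∀ c, Measurable (ξ c)) (hind : iIndepFun ξ μ) {r : ENNReal}
    (hunif : ∀ c a, μ (ξ c ⁻¹' {a}) = r) (θ : ι → κ) :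
    μ ((fun ω c => ξ c ω) ⁻¹' {θ}) = r ^ Fintype.card ι := by
  rw [← Measure.map_apply (measurable_pi_lambda _ hmeas) (measurableSet_singleton θ),
    (iIndepFun_iff_map_fun_eq_pi_map fun c => (hmeas c).aemeasurable).1 hind,
    Measure.pi_singleton]
  simp only [Measure.map_apply (hmeas _) (measurableSet_singleton _), hunif,
    Finset.prod_const, Finset.card_univ]

theorem integral_eq_toReal_mul_sum_of_eq_comp {Θ : Type*} [Fintype Θ] [MeasurableSpace Θ]
    [MeasurableSingletonClass Θ] [IsFiniteMeasure μ] {T : Ω → Θ} (hT : Measurable T)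
    {r : ENNReal} (hr : ∀ θ, μ (T ⁻¹' {θ}) = r) {σ : Θ → Ω} {F : Ω → ℝ}
    (hF : ∀ ω, F ω = F (σ (T ω))) :
    ∫ ω, F ω ∂μ = r.toReal * ∑ θ, F (σ θ) := by
  rw [integral_congr_ae (ae_of_all _ hF),
    ← integral_map (f := fun θ => F (σ θ)) hT.aemeasurable
      (Measurable.of_discrete).aestronglyMeasurable,
    integral_fintype (Integrable.of_finite), Finset.mul_sum]
  refine Finset.sum_congr rfl fun θ _ => ?_
  rw [smul_eq_mul, measureReal_def, Measure.map_apply hT (measurableSet_singleton θ), hr]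

end FiniteLaw

theorem gradient_mean {p m : ℕ} (f : Fin m → EuclideanSpace ℝ (Fin p) → ℝ)
    (hf : ∀ j, Differentiable ℝ (f j)) (z : EuclideanSpace ℝ (Fin p)) :
    gradient (fun w => (m : ℝ)⁻¹ * ∑ j, f j w) z = (m : ℝ)⁻¹ • ∑ j, gradient (f j) z := by
  have hd : ∀ j ∈ univ, DifferentiableAt ℝ (f j) z := fun j _ => (hf j).differentiableAt
  simp only [gradient, fderiv_const_mul (DifferentiableAt.fun_sum hd), fderiv_fun_sum hd,
    map_smul, map_sum]

theorem sum_sum_smul_of_sum_col_eq_one {M : Type*} [AddCommMonoid M] [Module ℝ M] {n : ℕ}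
    {W : Matrix (Fin n) (Fin n) ℝ} (hW : ∀ r, ∑ i, W i r = 1) (z : Fin n → M) :
    ∑ i, ∑ r, W i r • z r = ∑ r, z r := by
  rw [Finset.sum_comm]
  exact Finset.sum_congr rfl fun r _ => by rw [← Finset.sum_smul, hW, one_smul]

theorem epoch_induction {q : ℕ} {P : ℕ → ℕ → Prop} (h0 : P 1 0)
    (hstep : ∀ s, 1 ≤ s → ∀ t ≤ q, P s t → P s (t + 1))
    (hcarry : ∀ s, 1 ≤ s → P s (q + 1) → P (s + 1) 0) :
    ∀ s, 1 ≤ s → ∀ t ≤ q + 1, P s t := by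
  have hepoch : ∀ s, 1 ≤ s → P s 0 → ∀ t ≤ q + 1, P s t := by
    intro s hs h t
    induction t with
    | zero => exact fun _ => h
    | succ t ih => exact fun ht => hstep s hs t (by omega) (ih (by omega))
  intro s hs
  induction s, hs using Nat.le_induction with
  | base => exact hepoch 1 le_rfl h0
  | succ s hs ih => exact hepoch (s + 1) (by omega) (hcarry s hs (ih _ le_rfl))

section Run

variable {Ω E : Type*} {n m B : ℕ}

structure IsGTSarahRun [AddCommGroup E] [Module ℝ E] (W : Matrix (Fin n) (Fin n) ℝ) (α : ℝ)
    (g : Fin n → Fin m → E → E) (G : Fin n → E → E) (q : ℕ)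
    (τ : ℕ → ℕ → Fin n → Fin B → Ω → Fin m) (x0 : E)
    (x y : ℕ → ℕ → Fin n → Ω → E) (v : ℤ → ℕ → Fin n → Ω → E) : Prop where
  x_init : ∀ i ω, x 0 1 i ω = x0
  y_init : ∀ i ω, y 0 1 i ω = 0
  v_init : ∀ i ω, v (-1) 1 i ω = 0
  v_zero : ∀ s, 1 ≤ s → ∀ i ω, v 0 s i ω = G i (x 0 s i ω)
  v_succ : ∀ s, 1 ≤ s → ∀ t : ℕ, 1 ≤ t → t ≤ q → ∀ i ω,
    v t s i ω = (B : ℝ)⁻¹ • (∑ l, (g i (τ t s i l ω) (x t s i ω)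
      - g i (τ t s i l ω) (x (t - 1) s i ω))) + v ((t : ℤ) - 1) s i ω
  y_succ : ∀ s, 1 ≤ s → ∀ t : ℕ, t ≤ q → ∀ i ω,
    y (t + 1) s i ω = (∑ r, W i r • y t s r ω) + v t s i ω - v ((t : ℤ) - 1) s i ω
  x_succ : ∀ s, 1 ≤ s → ∀ t : ℕ, t ≤ q → ∀ i ω,
    x (t + 1) s i ω = (∑ r, W i r • x t s r ω) - α • y (t + 1) s i ω
  x_carry : ∀ s, 1 ≤ s → ∀ i ω, x 0 (s + 1) i ω = x (q + 1) s i ω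
  y_carry : ∀ s, 1 ≤ s → ∀ i ω, y 0 (s + 1) i ω = y (q + 1) s i ω
  v_carry : ∀ s, 1 ≤ s → ∀ i ω, v (-1) (s + 1) i ω = v q s i ω

def SamplesAgreeBefore (q : ℕ) (τ : ℕ → ℕ → Fin n → Fin B → Ω → Fin m) (s t : ℕ)
    (ω ω' : Ω) : Prop :=
  ∀ s' t' i l, 1 ≤ s' → 1 ≤ t' → t' ≤ q → (s' < s ∨ s' = s ∧ t' < t) →
    τ t' s' i l ω = τ t' s' i l ω'

theorem SamplesAgreeBefore.mono {q : ℕ} {τ : ℕ → ℕ → Fin n → Fin B → Ω → Fin m}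
    {s t s' t' : ℕ} {ω ω' : Ω} (h : SamplesAgreeBefore q τ s t ω ω')
    (hle : s' < s ∨ s' = s ∧ t' ≤ t) : SamplesAgreeBefore q τ s' t' ω ω' :=
  fun _ _ i l h1 h2 h3 hlt => h _ _ i l h1 h2 h3 (by omega)

/-- Coordinate `(a, b, i, l)` holds `τ (a + 1) (b + 1) i l`, the sample of node `i` at step
`a + 1` of epoch `b + 1`. -/
def sampleVector (τ : ℕ → ℕ → Fin n → Fin B → Ω → Fin m) (q s : ℕ) (ω : Ω) :
    Fin q × Fin s × Fin n × Fin B → Fin m :=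
  fun c => τ (c.1 + 1) (c.2.1 + 1) c.2.2.1 c.2.2.2 ω

theorem samplesAgreeBefore_of_sampleVector {τ : ℕ → ℕ → Fin n → Fin B → Ω → Fin m} {q s t : ℕ}
    {ω ω' : Ω} (h : ∀ c : Fin q × Fin s × Fin n × Fin B,
      (c.2.1 + 1 < s ∨ c.2.1 + 1 = s ∧ c.1 + 1 < t) →
        sampleVector τ q s ω c = sampleVector τ q s ω' c) :
    SamplesAgreeBefore q τ s t ω ω' := by
  intro s' t' i l hs' ht' htq hlt
  have := h (⟨t' - 1, by omega⟩, ⟨s' - 1, by omega⟩, i, l) (by dsimp only; omega)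
  simpa only [sampleVector, Nat.sub_add_cancel hs', Nat.sub_add_cancel ht'] using this

-- The coordinate of `τ (a.1 + 1) s a.2.1 a.2.2`; `Fin.ofNat` wraps around, so only `a.1 < q`
-- is meaningful.
def sampleSlot (q s : ℕ) [NeZero q] [NeZero s] (a : ℕ × Fin n × Fin B) :
    Fin q × Fin s × Fin n × Fin B :=
  (Fin.ofNat q a.1, Fin.ofNat s (s - 1), a.2.1, a.2.2)

section SampleSlot

variable {q s : ℕ} [NeZero q] [NeZero s]

theorem sampleSlot_val {a : ℕ × Fin n × Fin B} (ha : a.1 < q) :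
    ((sampleSlot q s a).1 : ℕ) = a.1 ∧ ((sampleSlot q s a).2.1 : ℕ) = s - 1 :=
  ⟨Nat.mod_eq_of_lt ha, Nat.mod_eq_of_lt (Nat.sub_lt (NeZero.pos s) one_pos)⟩

theorem sampleVector_sampleSlot (τ : ℕ → ℕ → Fin n → Fin B → Ω → Fin m) {u : ℕ} (hu : u < q)
    (i : Fin n) (l : Fin B) (ω : Ω) :
    sampleVector τ q s ω (sampleSlot q s (u, i, l)) = τ (u + 1) s i l ω := by
  obtain ⟨h1, h2⟩ := sampleSlot_val (s := s) (a := (u, i, l)) hu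
  rw [sampleVector, h1, h2, Nat.sub_add_cancel (NeZero.pos s)]
  rfl

theorem sampleSlot_injOn :
    Set.InjOn (sampleSlot (n := n) (B := B) q s)
      (range q ×ˢ univ : Finset (ℕ × Fin n × Fin B)) := by
  rintro ⟨u, i, l⟩ ha ⟨u', i', l'⟩ ha' he
  have hu := congrArg (fun c => (c.1 : ℕ)) he
  simp only [(sampleSlot_val (s := s) (a := (u, i, l)) (by simpa using ha)).1,
    (sampleSlot_val (s := s) (a := (u', i', l')) (by simpa using ha')).1] at hu
  simp only [sampleSlot, Prod.mk.injEq] at he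
  simp [hu, he]

theorem samplesAgreeBefore_of_eq_update {τ : ℕ → ℕ → Fin n → Fin B → Ω → Fin m}
    {a : ℕ × Fin n × Fin B} (ha : a.1 < q) {ω ω' : Ω} {j : Fin m}
    (hω : sampleVector τ q s ω = Function.update (sampleVector τ q s ω') (sampleSlot q s a) j)
    {w : ℕ} (hw : w ≤ a.1 + 1) : SamplesAgreeBefore q τ s w ω ω' := by
  refine samplesAgreeBefore_of_sampleVector fun c hc => ?_
  rw [hω, Function.update_of_ne]
  rintro rfl
  have := sampleSlot_val (s := s) ha
  omega

end SampleSlot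

theorem measure_sampleVector_preimage [MeasurableSpace Ω] {μ : Measure Ω}
    [IsProbabilityMeasure μ] {q : ℕ} {τ : ℕ → ℕ → Fin n → Fin B → Ω → Fin m}
    (hτmeas : ∀ t s i l, Measurable (τ t s i l))
    (hτindep : iIndepFun (fun c : {u : ℕ × ℕ // 1 ≤ u.1 ∧ u.1 ≤ q ∧ 1 ≤ u.2} × Fin n × Fin B =>
      τ c.1.1.1 c.1.1.2 c.2.1 c.2.2) μ)
    (hτunif : ∀ t s (i : Fin n) (l : Fin B), 1 ≤ t → t ≤ q → 1 ≤ s → ∀ j : Fin m,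
      μ (τ t s i l ⁻¹' {j}) = 1 / (m : ENNReal))
    (s : ℕ) (θ : Fin q × Fin s × Fin n × Fin B → Fin m) :
    μ (sampleVector τ q s ⁻¹' {θ}) = (1 / (m : ENNReal)) ^ (q * (s * (n * B))) := by
  let e : Fin q × Fin s × Fin n × Fin B →
      {u : ℕ × ℕ // 1 ≤ u.1 ∧ u.1 ≤ q ∧ 1 ≤ u.2} × Fin n × Fin B :=
    fun c => (⟨(c.1 + 1, c.2.1 + 1), by omega, c.1.isLt, by omega⟩, c.2.2)
  have he : Function.Injective e := by
    rintro ⟨a, b, c⟩ ⟨a', b', c'⟩ h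
    simp only [e, Prod.mk.injEq, Subtype.mk.injEq, add_left_inj, Fin.val_inj] at h
    simp [h]
  have := (hτindep.precomp he).measure_preimage_singleton_eq_pow (fun c => hτmeas _ _ _ _)
    (fun c => hτunif (c.1 + 1) (c.2.1 + 1) _ _ (Nat.le_add_left 1 _) c.1.isLt
      (Nat.le_add_left 1 _)) θ
  simp only [Fintype.card_prod, Fintype.card_fin] at this
  exact this

namespace IsGTSarahRun

section Algebra

variable [AddCommGroup E] [Module ℝ E] {W : Matrix (Fin n) (Fin n) ℝ} {α : ℝ}
  {g : Fin n → Fin m → E → E} {G : Fin n → E → E} {q : ℕ}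
  {τ : ℕ → ℕ → Fin n → Fin B → Ω → Fin m} {x0 : E} {x y : ℕ → ℕ → Fin n → Ω → E}
  {v : ℤ → ℕ → Fin n → Ω → E}

theorem sum_y_eq_sum_v (h : IsGTSarahRun W α g G q τ x0 x y v) (hW : ∀ r, ∑ i, W i r = 1) :
    ∀ s, 1 ≤ s → ∀ t ≤ q + 1, ∀ ω, ∑ i, y t s i ω = ∑ i, v ((t : ℤ) - 1) s i ω := by
  refine epoch_induction (fun ω => ?_) (fun s hs t ht ih ω => ?_) (fun s hs ih ω => ?_)
  · simp [h.y_init, h.v_init]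
  · simp only [h.y_succ s hs t ht, Finset.sum_sub_distrib, Finset.sum_add_distrib,
      sum_sum_smul_of_sum_col_eq_one hW, ih ω]
    push_cast
    rw [add_sub_cancel_left, add_sub_cancel_right]
  · have ih := ih ω
    push_cast at ih ⊢
    simp only [h.y_carry s hs, ih, h.v_carry s hs, add_sub_cancel_right]

theorem sum_x_succ (h : IsGTSarahRun W α g G q τ x0 x y v) (hW : ∀ r, ∑ i, W i r = 1) {s : ℕ}
    (hs : 1 ≤ s) {t : ℕ} (ht : t ≤ q) (ω : Ω) :
    ∑ i, x (t + 1) s i ω = ∑ i, x t s i ω - α • ∑ i, v t s i ω := by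
  simp only [h.x_succ s hs t ht, Finset.sum_sub_distrib, sum_sum_smul_of_sum_col_eq_one hW,
    ← Finset.smul_sum, h.sum_y_eq_sum_v hW s hs (t + 1) (by omega)]
  push_cast
  simp

-- `x (t - 1)` (which is `x 0` at `t = 0`) is carried along because `v t` reads it.
theorem eq_of_samplesAgreeBefore (h : IsGTSarahRun W α g G q τ x0 x y v) :
    ∀ s, 1 ≤ s → ∀ t ≤ q + 1, ∀ ω ω', SamplesAgreeBefore q τ s t ω ω' → ∀ i,
      x t s i ω = x t s i ω' ∧ x (t - 1) s i ω = x (t - 1) s i ω'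
        ∧ y t s i ω = y t s i ω' ∧ v ((t : ℤ) - 1) s i ω = v ((t : ℤ) - 1) s i ω' := by
  refine epoch_induction (fun ω ω' _ i => ?_) (fun s hs t ht ih ω ω' hω => ?_)
    (fun s hs ih ω ω' hω i => ?_)
  · simp [h.x_init, h.y_init, h.v_init]
  · have ih := ih ω ω' (hω.mono (Or.inr ⟨rfl, Nat.le_succ t⟩))
    have hv : ∀ i, v t s i ω = v t s i ω' := by
      intro i
      rcases Nat.eq_zero_or_pos t with rfl | ht0
      · simp only [Nat.cast_zero, h.v_zero s hs, (ih i).1]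
      · have hτ : ∀ l, τ t s i l ω = τ t s i l ω' :=
          fun l => hω s t i l hs ht0 ht (Or.inr ⟨rfl, Nat.lt_succ_self t⟩)
        simp only [h.v_succ s hs t ht0 ht, hτ, (ih i).1, (ih i).2.1, (ih i).2.2.2]
    have hy : ∀ i, y (t + 1) s i ω = y (t + 1) s i ω' := by
      intro i
      simp only [h.y_succ s hs t ht, hv, (ih i).2.2.2, fun r => (ih r).2.2.1]
    intro i
    refine ⟨?_, (ih i).1, hy i, by push_cast; simpa using hv i⟩
    simp only [h.x_succ s hs t ht, hy, fun r => (ih r).1]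
  · obtain ⟨hx, -, hy, hv⟩ := ih ω ω' (hω.mono (Or.inl (Nat.lt_succ_self s))) i
    push_cast at hv
    simp only [Nat.cast_zero, zero_sub, Nat.zero_sub, h.x_carry s hs, h.y_carry s hs,
      h.v_carry s hs]
    exact ⟨hx, hx, hy, by simpa using hv⟩

theorem eq_of_sampleVector_eq (h : IsGTSarahRun W α g G q τ x0 x y v) {s : ℕ} (hs : 1 ≤ s)
    {ω ω' : Ω} (hω : sampleVector τ q s ω = sampleVector τ q s ω') {u : ℕ} (hu : u ≤ q)
    (i : Fin n) : x u s i ω = x u s i ω' ∧ v u s i ω = v u s i ω' := by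
  have hagree : ∀ t, SamplesAgreeBefore q τ s t ω ω' := fun t =>
    samplesAgreeBefore_of_sampleVector fun c _ => congrFun hω c
  refine ⟨(h.eq_of_samplesAgreeBefore s hs u (by omega) _ _ (hagree u) i).1, ?_⟩
  have := (h.eq_of_samplesAgreeBefore s hs (u + 1) (by omega) _ _ (hagree (u + 1)) i).2.2.2
  push_cast at this
  simpa using this

end Algebra

variable [NormedAddCommGroup E] [InnerProductSpace ℝ E] {W : Matrix (Fin n) (Fin n) ℝ} {α : ℝ}
  {g : Fin n → Fin m → E → E} {G : Fin n → E → E} {q : ℕ}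
  {τ : ℕ → ℕ → Fin n → Fin B → Ω → Fin m} {x0 : E} {x y : ℕ → ℕ → Fin n → Ω → E}
  {v : ℤ → ℕ → Fin n → Ω → E}

theorem sum_sq_error_le [NeZero m] (h : IsGTSarahRun W α g G q τ x0 x y v)
    (hW : ∀ r, ∑ i, W i r = 1) (hG : ∀ i z, G i z = (m : ℝ)⁻¹ • ∑ j, g i j z) {L : ℝ}
    (hsmooth : ∀ i z z', (m : ℝ)⁻¹ * ∑ j, ‖g i j z - g i j z'‖ ^ 2 ≤ L ^ 2 * ‖z - z'‖ ^ 2)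
    (hn : n ≠ 0) (hB : B ≠ 0) {s t : ℕ} (hs : 1 ≤ s) (ht1 : 1 ≤ t) (htq : t ≤ q)
    {σ : (Fin q × Fin s × Fin n × Fin B → Fin m) → Ω} (hσ : ∀ θ, sampleVector τ q s (σ θ) = θ) :
    ∑ θ, ‖(n : ℝ)⁻¹ • ∑ i, v t s i (σ θ) - (n : ℝ)⁻¹ • ∑ i, G i (x t s i (σ θ))‖ ^ 2
      ≤ (3 * α ^ 2 * L ^ 2 / ((n : ℝ) * B)) *
          ∑ u ∈ range t, ∑ θ, ‖(n : ℝ)⁻¹ • ∑ i, v u s i (σ θ)‖ ^ 2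
        + (6 * L ^ 2 / ((n : ℝ) ^ 2 * B)) *
          ∑ u ∈ range (t + 1), ∑ θ, consensusError fun i => x u s i (σ θ) := by
  have : NeZero q := ⟨by omega⟩
  have : NeZero s := ⟨by omega⟩
  have hX : ∀ a ∈ (range t ×ˢ univ : Finset (ℕ × Fin n × Fin B)), ∀ w ≤ a.1 + 1, ∀ i θ j,
      x w s i (σ (Function.update θ (sampleSlot q s a) j)) = x w s i (σ θ) := by
    intro a ha w hw i θ j
    have ha : a.1 < t := by simpa using ha
    exact (h.eq_of_samplesAgreeBefore s hs w (by omega) _ _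
      (samplesAgreeBefore_of_eq_update (by omega) (by rw [hσ, hσ]) hw) i).1
  have key := sum_sq_sarahError_le g (sampleSlot q s) (fun u i θ => x u s i (σ θ))
    (fun u i θ => v u s i (σ θ)) hn hB hsmooth
    (sampleSlot_injOn.mono (Finset.coe_subset.2
      (Finset.product_subset_product_left (Finset.range_mono htq))))
    hX
    (fun u hu i θ => by
      rw [h.v_succ s hs (u + 1) (by omega) (by omega), ← hσ θ]
      simp only [sampleVector_sampleSlot τ (by omega : u < q), hσ, Nat.add_sub_cancel,
        Nat.cast_succ, add_sub_cancel_right])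
    (fun i θ => h.v_zero s hs i _ |>.trans (hG _ _))
    (fun u hu θ => h.sum_x_succ hW hs (by omega) _)
  simpa only [hG] using key

theorem integral_sq_error_le [MeasurableSpace Ω] {μ : Measure Ω} [IsProbabilityMeasure μ]
    (h : IsGTSarahRun W α g G q τ x0 x y v)
    (hW : ∀ r, ∑ i, W i r = 1) (hG : ∀ i z, G i z = (m : ℝ)⁻¹ • ∑ j, g i j z) {L : ℝ}
    (hsmooth : ∀ i z z', (m : ℝ)⁻¹ * ∑ j, ‖g i j z - g i j z'‖ ^ 2 ≤ L ^ 2 * ‖z - z'‖ ^ 2)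
    (hn : n ≠ 0) (hm : m ≠ 0) (hB : B ≠ 0) (hτmeas : ∀ t s i l, Measurable (τ t s i l))
    (hτindep : iIndepFun (fun c : {u : ℕ × ℕ // 1 ≤ u.1 ∧ u.1 ≤ q ∧ 1 ≤ u.2} × Fin n × Fin B =>
      τ c.1.1.1 c.1.1.2 c.2.1 c.2.2) μ)
    (hτunif : ∀ t s (i : Fin n) (l : Fin B), 1 ≤ t → t ≤ q → 1 ≤ s → ∀ j : Fin m,
      μ (τ t s i l ⁻¹' {j}) = 1 / (m : ENNReal))
    {s t : ℕ} (hs : 1 ≤ s) (ht1 : 1 ≤ t) (htq : t ≤ q) :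
    ∫ ω, ‖(n : ℝ)⁻¹ • ∑ i, v t s i ω - (n : ℝ)⁻¹ • ∑ i, G i (x t s i ω)‖ ^ 2 ∂μ
      ≤ (3 * α ^ 2 * L ^ 2 / ((n : ℝ) * B)) *
          ∑ u ∈ range t, ∫ ω, ‖(n : ℝ)⁻¹ • ∑ i, v u s i ω‖ ^ 2 ∂μ
        + (6 * L ^ 2 / ((n : ℝ) ^ 2 * B)) * ∑ u ∈ range (t + 1),
            ∫ ω, ∑ i, ‖x u s i ω - (n : ℝ)⁻¹ • ∑ i', x u s i' ω‖ ^ 2 ∂μ := by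
  have : NeZero m := ⟨hm⟩
  set T := sampleVector τ q s
  set r := ((1 / (m : ENNReal)) ^ (q * (s * (n * B)))).toReal
  have hlaw : ∀ θ, μ (T ⁻¹' {θ}) = (1 / (m : ENNReal)) ^ (q * (s * (n * B))) :=
    measure_sampleVector_preimage hτmeas hτindep hτunif s
  choose σ hTσ using fun θ => nonempty_of_measure_ne_zero ((hlaw θ).trans_ne (by simp))
  have hint := fun F => integral_eq_toReal_mul_sum_of_eq_comp (T := T) (σ := σ) (F := F)
    (measurable_pi_lambda _ fun c => hτmeas _ _ _ _) hlaw
  have hT : ∀ ω, T (σ (T ω)) = T ω := fun ω => hTσ (T ω)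
  have hx : ∀ u ≤ q, ∀ i ω, x u s i ω = x u s i (σ (T ω)) := fun u hu i ω =>
    (h.eq_of_sampleVector_eq hs (hT ω).symm hu i).1
  have hv : ∀ u ≤ q, ∀ i ω, v u s i ω = v u s i (σ (T ω)) := fun u hu i ω =>
    (h.eq_of_sampleVector_eq hs (hT ω).symm hu i).2
  have hD : ∀ u ∈ range t, ∫ ω, ‖(n : ℝ)⁻¹ • ∑ i, v u s i ω‖ ^ 2 ∂μ
      = r * ∑ θ, ‖(n : ℝ)⁻¹ • ∑ i, v u s i (σ θ)‖ ^ 2 := fun u hu =>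
    hint _ fun ω => by simp only [← hv u (by simp at hu; omega)]
  have hC : ∀ u ∈ range (t + 1), ∫ ω, ∑ i, ‖x u s i ω - (n : ℝ)⁻¹ • ∑ i', x u s i' ω‖ ^ 2 ∂μ
      = r * ∑ θ, consensusError fun i => x u s i (σ θ) := fun u hu =>
    hint _ fun ω => by simp only [← hx u (by simp at hu; omega)]
  rw [hint _ fun ω => by simp only [← hx t htq, ← hv t htq], Finset.sum_congr rfl hD,
    Finset.sum_congr rfl hC]
  calc _ ≤ r * ((3 * α ^ 2 * L ^ 2 / ((n : ℝ) * B)) *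
          ∑ u ∈ range t, ∑ θ, ‖(n : ℝ)⁻¹ • ∑ i, v u s i (σ θ)‖ ^ 2
        + (6 * L ^ 2 / ((n : ℝ) ^ 2 * B)) *
          ∑ u ∈ range (t + 1), ∑ θ, consensusError fun i => x u s i (σ θ)) :=
        mul_le_mul_of_nonneg_left (h.sum_sq_error_le hW hG hsmooth hn hB hs ht1 htq hTσ)
          ENNReal.toReal_nonneg
    _ = _ := by
        rw [mul_add, mul_left_comm r, mul_left_comm r, Finset.mul_sum (range t),
          Finset.mul_sum (range (t + 1))]

end IsGTSarahRun

end Run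

theorem gt_sarah_vr_step_general
    {Ω : Type*} [MeasurableSpace Ω] (μ : Measure Ω) [IsProbabilityMeasure μ]
    (n m p q B : ℕ) (hn : 1 ≤ n) (hm : 1 ≤ m)
    (hB1 : 1 ≤ B)
    (α L : ℝ)
    (f : Fin n → Fin m → EuclideanSpace ℝ (Fin p) → ℝ)
    (hdiff : ∀ i j, Differentiable ℝ (f i j))
    (hsmooth : ∀ i (u w : EuclideanSpace ℝ (Fin p)),
      (m : ℝ)⁻¹ * ∑ j, ‖gradient (f i j) u - gradient (f i j) w‖ ^ 2 ≤ L ^ 2 * ‖u - w‖ ^ 2)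
    (fI : Fin n → EuclideanSpace ℝ (Fin p) → ℝ)
    (hfI : ∀ i, fI i = fun z => (m : ℝ)⁻¹ * ∑ j, f i j z)
    (W : Matrix (Fin n) (Fin n) ℝ)
    (hWcol : ∀ r, ∑ i, W i r = 1)
    (τ : ℕ → ℕ → Fin n → Fin B → Ω → Fin m)
    (hτmeas : ∀ t s i l, Measurable (τ t s i l))
    (hτindep : ProbabilityTheory.iIndepFun
      (m := fun _ : {u : ℕ × ℕ // 1 ≤ u.1 ∧ u.1 ≤ q ∧ 1 ≤ u.2} × Fin n × Fin B =>
        (inferInstance : MeasurableSpace (Fin m)))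
      (fun idx => τ idx.1.1.1 idx.1.1.2 idx.2.1 idx.2.2) μ)
    (hτunif : ∀ t s (i : Fin n) (l : Fin B), 1 ≤ t → t ≤ q → 1 ≤ s → ∀ j : Fin m,
      μ (τ t s i l ⁻¹' {j}) = 1 / (m : ENNReal))
    (x y : ℕ → ℕ → Fin n → Ω → EuclideanSpace ℝ (Fin p))
    (v : ℤ → ℕ → Fin n → Ω → EuclideanSpace ℝ (Fin p))
    (x0 : EuclideanSpace ℝ (Fin p))
    (hx0 : ∀ i ω, x 0 1 i ω = x0)
    (hy0 : ∀ i ω, y 0 1 i ω = 0)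
    (hvm1 : ∀ i ω, v (-1) 1 i ω = 0)
    (hv0 : ∀ s, 1 ≤ s → ∀ i ω, v 0 s i ω = gradient (fI i) (x 0 s i ω))
    (hvrec : ∀ s, 1 ≤ s → ∀ t : ℕ, 1 ≤ t → t ≤ q → ∀ i ω,
      v (t : ℤ) s i ω = (B : ℝ)⁻¹ • (∑ l, (gradient (f i (τ t s i l ω)) (x t s i ω)
        - gradient (f i (τ t s i l ω)) (x (t - 1) s i ω))) + v ((t : ℤ) - 1) s i ω)
    (hyrec : ∀ s, 1 ≤ s → ∀ t : ℕ, t ≤ q → ∀ i ω,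
      y (t + 1) s i ω = (∑ r, W i r • y t s r ω) + v (t : ℤ) s i ω - v ((t : ℤ) - 1) s i ω)
    (hxrec : ∀ s, 1 ≤ s → ∀ t : ℕ, t ≤ q → ∀ i ω,
      x (t + 1) s i ω = (∑ r, W i r • x t s r ω) - α • y (t + 1) s i ω)
    (hxcarry : ∀ s, 1 ≤ s → ∀ i ω, x 0 (s + 1) i ω = x (q + 1) s i ω)
    (hycarry : ∀ s, 1 ≤ s → ∀ i ω, y 0 (s + 1) i ω = y (q + 1) s i ω)
    (hvcarry : ∀ s, 1 ≤ s → ∀ i ω, v (-1) (s + 1) i ω = v (q : ℤ) s i ω)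
    :
    ∀ s : ℕ, 1 ≤ s → ∀ t : ℕ, 1 ≤ t → t ≤ q →
      ∫ ω, ‖(n : ℝ)⁻¹ • ∑ i, v (t : ℤ) s i ω
          - (n : ℝ)⁻¹ • ∑ i, gradient (fI i) (x t s i ω)‖ ^ 2 ∂μ
        ≤ (3 * α ^ 2 * L ^ 2 / ((n : ℝ) * B)) *
            ∑ u ∈ range t, ∫ ω, ‖(n : ℝ)⁻¹ • ∑ i, v (u : ℤ) s i ω‖ ^ 2 ∂μ
          + (6 * L ^ 2 / ((n : ℝ) ^ 2 * B)) * ∑ u ∈ range (t + 1),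
              ∫ ω, ∑ i, ‖x u s i ω - (n : ℝ)⁻¹ • ∑ i', x u s i' ω‖ ^ 2 ∂μ := by
  intro s hs t ht1 htq
  have run : IsGTSarahRun W α (fun i j => gradient (f i j)) (fun i => gradient (fI i)) q τ x0
      x y v :=
    ⟨hx0, hy0, hvm1, hv0, hvrec, hyrec, hxrec, hxcarry, hycarry, hvcarry⟩
  exact run.integral_sq_error_le hWcol
    (fun i z => by rw [hfI i]; exact gradient_mean (f i) (hdiff i) z) hsmooth (by omega)
    (by omega) (by omega) hτmeas hτindep hτunif hs ht1 htq

/-- GT-SARAH setup. -/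
theorem gt_sarah_vr_step
    {Ω : Type*} [MeasurableSpace Ω] (μ : Measure Ω) [IsProbabilityMeasure μ]
    (n m p q B : ℕ) (hn : 1 ≤ n) (hm : 1 ≤ m) (hp : 1 ≤ p) (hq : 1 ≤ q)
    (hB1 : 1 ≤ B) (hBm : B ≤ m)
    (α L : ℝ) (hα0 : 0 < α) (hL : 0 < L)
    (f : Fin n → Fin m → EuclideanSpace ℝ (Fin p) → ℝ)
    (hdiff : ∀ i j, Differentiable ℝ (f i j))
    (hsmooth : ∀ i (u w : EuclideanSpace ℝ (Fin p)),
      (m : ℝ)⁻¹ * ∑ j, ‖gradient (f i j) u - gradient (f i j) w‖ ^ 2 ≤ L ^ 2 * ‖u - w‖ ^ 2)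
    (fI : Fin n → EuclideanSpace ℝ (Fin p) → ℝ)
    (hfI : ∀ i, fI i = fun z => (m : ℝ)⁻¹ * ∑ j, f i j z)
    (F : EuclideanSpace ℝ (Fin p) → ℝ)
    (hF : F = fun z => (n : ℝ)⁻¹ * ∑ i, fI i z)
    (Fstar : ℝ) (hFbdd : BddBelow (Set.range F)) (hFstar : Fstar = sInf (Set.range F))
    (W : Matrix (Fin n) (Fin n) ℝ)
    (hWnonneg : ∀ i r, 0 ≤ W i r) (hWdiag : ∀ i, 0 < W i i)
    (hWprim : ∃ k : ℕ, 0 < k ∧ ∀ i r, 0 < (W ^ k) i r)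
    (hWrow : ∀ i, ∑ r, W i r = 1) (hWcol : ∀ r, ∑ i, W i r = 1)
    (lam : ℝ)
    (hlam : lam = ‖(Matrix.toEuclideanCLM (𝕜 := ℝ) (W - Matrix.of fun _ _ => (n : ℝ)⁻¹) :
      EuclideanSpace ℝ (Fin n) →L[ℝ] EuclideanSpace ℝ (Fin n))‖)
    (hlam0 : 0 ≤ lam) (hlam1 : lam < 1)
    (τ : ℕ → ℕ → Fin n → Fin B → Ω → Fin m)
    (hτmeas : ∀ t s i l, Measurable (τ t s i l))
    (hτindep : ProbabilityTheory.iIndepFun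
      (m := fun _ : {u : ℕ × ℕ // 1 ≤ u.1 ∧ u.1 ≤ q ∧ 1 ≤ u.2} × Fin n × Fin B =>
        (inferInstance : MeasurableSpace (Fin m)))
      (fun idx => τ idx.1.1.1 idx.1.1.2 idx.2.1 idx.2.2) μ)
    (hτunif : ∀ t s (i : Fin n) (l : Fin B), 1 ≤ t → t ≤ q → 1 ≤ s → ∀ j : Fin m,
      μ (τ t s i l ⁻¹' {j}) = 1 / (m : ENNReal))
    (x y : ℕ → ℕ → Fin n → Ω → EuclideanSpace ℝ (Fin p))
    (v : ℤ → ℕ → Fin n → Ω → EuclideanSpace ℝ (Fin p))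
    (x0 : EuclideanSpace ℝ (Fin p))
    (hx0 : ∀ i ω, x 0 1 i ω = x0)
    (hy0 : ∀ i ω, y 0 1 i ω = 0)
    (hvm1 : ∀ i ω, v (-1) 1 i ω = 0)
    (hv0 : ∀ s, 1 ≤ s → ∀ i ω, v 0 s i ω = gradient (fI i) (x 0 s i ω))
    (hvrec : ∀ s, 1 ≤ s → ∀ t : ℕ, 1 ≤ t → t ≤ q → ∀ i ω,
      v (t : ℤ) s i ω = (B : ℝ)⁻¹ • (∑ l, (gradient (f i (τ t s i l ω)) (x t s i ω)
        - gradient (f i (τ t s i l ω)) (x (t - 1) s i ω))) + v ((t : ℤ) - 1) s i ω)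
    (hyrec : ∀ s, 1 ≤ s → ∀ t : ℕ, t ≤ q → ∀ i ω,
      y (t + 1) s i ω = (∑ r, W i r • y t s r ω) + v (t : ℤ) s i ω - v ((t : ℤ) - 1) s i ω)
    (hxrec : ∀ s, 1 ≤ s → ∀ t : ℕ, t ≤ q → ∀ i ω,
      x (t + 1) s i ω = (∑ r, W i r • x t s r ω) - α • y (t + 1) s i ω)
    (hxcarry : ∀ s, 1 ≤ s → ∀ i ω, x 0 (s + 1) i ω = x (q + 1) s i ω)
    (hycarry : ∀ s, 1 ≤ s → ∀ i ω, y 0 (s + 1) i ω = y (q + 1) s i ω)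
    (hvcarry : ∀ s, 1 ≤ s → ∀ i ω, v (-1) (s + 1) i ω = v (q : ℤ) s i ω)
    :
    ∀ s : ℕ, 1 ≤ s → ∀ t : ℕ, 1 ≤ t → t ≤ q →
      ∫ ω, ‖(n : ℝ)⁻¹ • ∑ i, v (t : ℤ) s i ω
          - (n : ℝ)⁻¹ • ∑ i, gradient (fI i) (x t s i ω)‖ ^ 2 ∂μ
        ≤ (3 * α ^ 2 * L ^ 2 / ((n : ℝ) * B)) *
            ∑ u ∈ range t, ∫ ω, ‖(n : ℝ)⁻¹ • ∑ i, v (u : ℤ) s i ω‖ ^ 2 ∂μ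
          + (6 * L ^ 2 / ((n : ℝ) ^ 2 * B)) * ∑ u ∈ range (t + 1),
              ∫ ω, ∑ i, ‖x u s i ω - (n : ℝ)⁻¹ • ∑ i', x u s i' ω‖ ^ 2 ∂μ :=
  gt_sarah_vr_step_general μ n m p q B hn hm hB1 α L f hdiff hsmooth fI hfI W hWcol τ hτmeas hτindep
    hτunif x y v x0 hx0 hy0 hvm1 hv0 hvrec hyrec hxrec hxcarry hycarry hvcarry
end
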